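/- arXiv:0810.3133 — 12 statements merged into one kernel-verified Lean document; each statement's English description precedes it below -/
import Mathlib

section
/- If G is a non-complete double-critical k-chromatic graph, then G does not contain the complete graph K_{k-1} as a subgraph. -/
open SimpleGraph

/-- A graph is vertex-critical if deleting any vertex decreases the chromatic number. -/
def VertexCritical {V : Type} (G : SimpleGraph V) : Prop :=
  ∀ v : V, (G.induce ({v}ᶜ : Set V)).chromaticNumber < G.chromaticNumber

/-- A vertex-critical graph is double-critical if deleting the two end-vertices of any
edge decreases the chromatic number by at least two. -/
def DoubleCritical {V : Type} (G : SimpleGraph V) : Prop :=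
  VertexCritical G ∧
  ∀ x y : V, G.Adj x y →
    (G.induce ({x, y}ᶜ : Set V)).chromaticNumber + 2 ≤ G.chromaticNumber

/-!
Let `S` be a `(k-1)`-clique. Deleting the ends of an edge leaves a `(k-2)`-colorable
graph, which cannot contain `S`; so `S` meets every edge. A vertex `u ∉ S` therefore has all its
neighbours in `S`; if it missed some `s ∈ S`, then in a `(k-1)`-coloring of `G - u` the color of
`s` is absent from the neighbourhood of `u`, and `u` could take it, so `χ(G) ≤ k-1`. Hence every
vertex outside `S` is joined to all of `S`. Two vertices `u ≠ w` outside `S` are impossible: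
for `s ∈ S` the clique `S - s + w` also has `k-1` vertices but misses the edge `us`.
So at most one vertex lies outside `S`, and `G` is complete.
-/

namespace SimpleGraph

variable {V : Type} {G : SimpleGraph V}

theorem IsClique.card_le_chromaticNumber_induce {s : Finset V} {t : Set V} (hs : G.IsClique s)
    (hst : (s : Set V) ⊆ t) : (s.card : ℕ∞) ≤ (G.induce t).chromaticNumber :=
  le_chromaticNumber_of_pairwise_adj (by simp) (fun x : s ↦ (⟨x, hst x.2⟩ : t))
    fun x y hxy ↦ hs x.2 y.2 (Subtype.coe_ne_coe.mpr hxy)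

theorem nonempty_coloring_of_coloring_induce_compl_singleton {α : Type*} {u : V}
    (c : (G.induce ({u}ᶜ : Set V)).Coloring α) (a : α)
    (ha : ∀ w (hw : w ∈ ({u}ᶜ : Set V)), G.Adj u w → c ⟨w, hw⟩ ≠ a) :
    Nonempty (G.Coloring α) := by
  classical
  refine ⟨Coloring.mk (fun v ↦ if hv : v = u then a else c ⟨v, hv⟩) fun {v w} hvw ↦ ?_⟩
  by_cases hv : v = u <;> by_cases hw : w = u
  · exact absurd (hv.trans hw.symm) hvw.ne
  · subst hv
    simpa [hw] using (ha w hw hvw).symm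
  · subst hw
    simpa [hv] using ha v hv hvw.symm
  · simpa [hv, hw] using c.valid (v := ⟨v, hv⟩) (w := ⟨w, hw⟩) hvw

end SimpleGraph

variable {V : Type} {G : SimpleGraph V} {k : ℕ}

theorem VertexCritical.colorable_induce_compl_singleton (hvc : VertexCritical G)
    (hχ : G.chromaticNumber = k) (v : V) : (G.induce ({v}ᶜ : Set V)).Colorable (k - 1) := by
  have hlt := hvc v
  rw [hχ] at hlt
  cases k with
  | zero => exact absurd hlt not_lt_zero
  | succ k =>
    rw [Nat.cast_succ, ENat.lt_natCast_add_one_iff] at hlt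
    exact chromaticNumber_le_iff_colorable.mp hlt

theorem DoubleCritical.card_add_two_le_of_isClique (hdc : DoubleCritical G) {x y : V}
    (hxy : G.Adj x y) {s : Finset V} (hs : G.IsClique s) (hx : x ∉ s) (hy : y ∉ s) :
    (s.card : ℕ∞) + 2 ≤ G.chromaticNumber := by
  have hsub : (s : Set V) ⊆ ({x, y}ᶜ : Set V) := by
    intro z hz
    simp only [Set.mem_compl_iff, Set.mem_insert_iff, Set.mem_singleton_iff, not_or]
    exact ⟨fun h ↦ hx (h ▸ hz), fun h ↦ hy (h ▸ hz)⟩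
  calc (s.card : ℕ∞) + 2 ≤ (G.induce ({x, y}ᶜ : Set V)).chromaticNumber + 2 := by
        gcongr; exact hs.card_le_chromaticNumber_induce hsub
    _ ≤ G.chromaticNumber := hdc.2 x y hxy

namespace DoubleCritical

variable (hdc : DoubleCritical G) (hχ : G.chromaticNumber = k)
  {S : Finset V} (hS : G.IsClique S) (hcard : S.card = k - 1)
include hdc hχ hS hcard

theorem mem_or_mem_of_adj {x y : V} (hxy : G.Adj x y) : x ∈ S ∨ y ∈ S := by
  by_contra! h
  have := hdc.card_add_two_le_of_isClique hxy hS h.1 h.2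
  rw [hχ, hcard] at this
  norm_cast at this
  omega

theorem adj_of_notMem_of_mem {u s : V} (hu : u ∉ S) (hs : s ∈ S) : G.Adj u s := by
  by_contra hus
  obtain ⟨c⟩ := hdc.1.colorable_induce_compl_singleton hχ u
  have hsu : s ∈ ({u}ᶜ : Set V) := fun h ↦ hu (h ▸ hs)
  have hcol : G.Colorable (k - 1) :=
    nonempty_coloring_of_coloring_induce_compl_singleton c (c ⟨s, hsu⟩)
    fun w hw huw ↦ by
      have hwS : w ∈ S := (hdc.mem_or_mem_of_adj hχ hS hcard huw).resolve_left hu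
      have hws : w ≠ s := by rintro rfl; exact hus huw
      exact c.valid (v := ⟨w, hw⟩) (w := ⟨s, hsu⟩) (hS hwS hs hws)
  have hk : 0 < k := by exact_mod_cast pos_of_gt (hχ ▸ hdc.1 u)
  have := hcol.chromaticNumber_le
  rw [hχ] at this
  norm_cast at this
  omega

theorem eq_of_notMem_of_notMem {u w : V} (hu : u ∉ S) (hw : w ∉ S) : u = w := by
  classical
  by_contra huw
  rcases S.eq_empty_or_nonempty with hS₀ | ⟨s, hs⟩
  · -- with `S = ∅` we have `k ≤ 1`, so `G - u` has no vertices, yet contains `w`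
    rw [hS₀, Finset.card_empty] at hcard
    have := (hdc.1.colorable_induce_compl_singleton hχ u).mono hcard.ge |>.isEmpty
    exact this.elim ⟨w, Ne.symm huw⟩
  set T : Finset V := insert w (S.erase s)
  have hT : G.IsClique T := by
    rw [Finset.coe_insert]
    exact (hS.subset (Finset.coe_subset.mpr (S.erase_subset s))).insert
      fun b hb _ ↦ adj_of_notMem_of_mem hdc hχ hS hcard hw (Finset.mem_of_mem_erase hb)
  have hTcard : T.card = k - 1 := by
    rw [Finset.card_insert_of_notMem fun h ↦ hw (Finset.mem_of_mem_erase h),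
      Finset.card_erase_of_mem hs, hcard]
    have : 0 < k - 1 := hcard ▸ Finset.card_pos.mpr ⟨s, hs⟩
    omega
  have huT : u ∉ T := by simp [T, huw, hu]
  have hsT : s ∉ T := by simp [T, show s ≠ w by rintro rfl; exact hw hs]
  have hus := adj_of_notMem_of_mem hdc hχ hS hcard hu hs
  exact (hdc.mem_or_mem_of_adj hχ hT hTcard hus).elim huT hsT

theorem eq_top_of_isClique_card_eq : G = ⊤ := by
  ext v w
  refine ⟨Adj.ne, fun hvw ↦ ?_⟩
  by_cases hv : v ∈ S <;> by_cases hw : w ∈ S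
  · exact hS hv hw hvw
  · exact (adj_of_notMem_of_mem hdc hχ hS hcard hw hv).symm
  · exact adj_of_notMem_of_mem hdc hχ hS hcard hv hw
  · exact absurd (eq_of_notMem_of_notMem hdc hχ hS hcard hv hw) hvw

end DoubleCritical

theorem stmt0_general {V : Type} (G : SimpleGraph V) (k : ℕ)
    (hnc : G ≠ ⊤) (hdc : DoubleCritical G) (hchrom : G.chromaticNumber = k) :
    ¬ ∃ s : Finset V, s.card = k - 1 ∧ (s : Set V).Pairwise G.Adj := by
  rintro ⟨S, hcard, hS⟩
  exact hnc (hdc.eq_top_of_isClique_card_eq hchrom hS hcard)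

/-- If `G` is a non-complete double-critical `k`-chromatic graph, then `G` does not contain
the complete graph `K_{k-1}` as a subgraph. -/
theorem stmt0 {V : Type} [Fintype V] (G : SimpleGraph V) (k : ℕ)
    (hnc : G ≠ ⊤) (hdc : DoubleCritical G) (hchrom : G.chromaticNumber = k) :
    ¬ ∃ s : Finset V, s.card = k - 1 ∧ (s : Set V).Pairwise G.Adj :=
  stmt0_general G k hnc hdc hchrom
end

section
/- If G is a non-complete double-critical k-chromatic graph and H is a connected subgraph of G with at least 2 vertices, then the graph G/V(H) obtained from G by contracting V(H) to a single vertex is (k−1)-colourable; equivalently, there exists a function c from V(G) to a set of k−1 colours that is constant on V(H) and satisfies c(u) ≠ c(v) for every edge uv of G whose endpoints do not both lie in V(H). -/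
open SimpleGraph

/-
Since `s` induces a connected graph on at least two vertices, it contains an edge
`xy`. Double-criticality gives a `(k-2)`-colouring of `G - x - y`; every vertex outside `s` is
coloured by it, and the whole of `s` receives one new colour, for `k-1` colours in total.
-/

namespace SimpleGraph

variable {V : Type} {G : SimpleGraph V}

theorem Connected.exists_adj_of_one_lt_ncard {s : Set V} (hconn : (G.induce s).Connected)
    (hs : 1 < s.ncard) : ∃ x ∈ s, ∃ y ∈ s, G.Adj x y := by
  have : Nontrivial s := (Set.one_lt_ncard_iff_nontrivial_and_finite.mp hs).1.coe_sort
  obtain ⟨⟨x, hx⟩⟩ := hconn.nonempty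
  obtain ⟨⟨y, hy⟩, hxy⟩ := hconn.preconnected.exists_adj_of_nontrivial ⟨x, hx⟩
  exact ⟨x, hx, y, hy, hxy⟩

theorem Colorable.exists_extend_constant_on {s t : Set V} (hts : tᶜ ⊆ s)
    {n : ℕ} (hcol : (G.induce t).Colorable n) :
    ∃ c : V → Fin (n + 1), (∀ u ∈ s, ∀ v ∈ s, c u = c v) ∧
      ∀ u v, G.Adj u v → ¬(u ∈ s ∧ v ∈ s) → c u ≠ c v := by
  classical
  obtain ⟨C⟩ := hcol
  have hmem {v : V} (hv : v ∉ s) : v ∈ t := by_contra fun h ↦ hv (hts h)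
  refine ⟨fun v ↦ if hv : v ∈ s then Fin.last n else (C ⟨v, hmem hv⟩).castSucc, ?_, ?_⟩
  · intro u hu v hv
    simp only [dif_pos hu, dif_pos hv]
  · intro u v huv hns
    by_cases hu : u ∈ s <;> by_cases hv : v ∈ s
    · exact absurd ⟨hu, hv⟩ hns
    · simpa only [dif_pos hu, dif_neg hv] using (Fin.castSucc_lt_last _).ne'
    · simpa only [dif_neg hu, dif_pos hv] using (Fin.castSucc_lt_last _).ne
    · simpa [hu, hv] using C.valid (show (G.induce t).Adj ⟨u, hmem hu⟩ ⟨v, hmem hv⟩ from huv)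

end SimpleGraph

theorem DoubleCritical.colorable_induce_compl_pair {V : Type} {G : SimpleGraph V}
    (hdc : DoubleCritical G) {n : ℕ} (hχ : G.chromaticNumber = (n + 2 : ℕ))
    {x y : V} (hxy : G.Adj x y) : (G.induce ({x, y}ᶜ : Set V)).Colorable n := by
  rw [← chromaticNumber_le_iff_colorable]
  have h := hdc.2 x y hxy
  rw [hχ, Nat.cast_add] at h
  exact (ENat.add_le_add_iff_right (by simp)).mp h

theorem stmt1_general {V : Type} (G : SimpleGraph V) (k : ℕ)
    (hdc : DoubleCritical G) (hchrom : G.chromaticNumber = k)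
    (s : Set V) (hconn : (G.induce s).Connected) (hcard : 2 ≤ s.ncard) :
    ∃ c : V → Fin (k - 1),
      (∀ u ∈ s, ∀ v ∈ s, c u = c v) ∧
      (∀ u v : V, G.Adj u v → ¬(u ∈ s ∧ v ∈ s) → c u ≠ c v) := by
  obtain ⟨x, hx, y, hy, hxy⟩ := hconn.exists_adj_of_one_lt_ncard hcard
  obtain ⟨n, rfl⟩ : ∃ n, k = n + 2 :=
    Nat.exists_eq_add_of_le' (by exact_mod_cast hchrom ▸ two_le_chromaticNumber_of_adj hxy)
  have hcol := hdc.colorable_induce_compl_pair hchrom hxy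
  refine hcol.exists_extend_constant_on fun v hv ↦ ?_
  rw [compl_compl] at hv
  rcases hv with rfl | rfl <;> assumption

/-- If `G` is a non-complete double-critical `k`-chromatic graph and `s` is the vertex set of
a connected subgraph of `G` with at least two vertices, then the graph obtained from `G` by
contracting `s` to a single vertex is `(k-1)`-colourable: there is a function `c` from the
vertices to `k-1` colours that is constant on `s` and distinguishes the endpoints of every
edge of `G` whose endpoints do not both lie in `s`. -/
theorem stmt1 {V : Type} [Fintype V] (G : SimpleGraph V) (k : ℕ)
    (hnc : G ≠ ⊤) (hdc : DoubleCritical G) (hchrom : G.chromaticNumber = k)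
    (s : Set V) (hconn : (G.induce s).Connected) (hcard : 2 ≤ s.ncard) :
    ∃ c : V → Fin (k - 1),
      (∀ u ∈ s, ∀ v ∈ s, c u = c v) ∧
      (∀ u v : V, G.Adj u v → ¬(u ∈ s ∧ v ∈ s) → c u ≠ c v) :=
  stmt1_general G k hdc hchrom s hconn hcard
end

section
/- Let G be a non-complete double-critical k-chromatic graph. For every edge xy of G, every proper (k−2)-colouring φ of G − x − y using the colour set {1, …, k−2}, and every non-empty sequence j_1, j_2, …, j_i of i pairwise distinct colours from {1, …, k−2}, there is a path in G of order i+2 starting at x, ending at y, whose t-th vertex after x has colour j_t under φ for every t ∈ {1, …, i}. -/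
open SimpleGraph

/- ## Auxiliary development -/

private lemma aux_getVert_concat {V : Type} {G : SimpleGraph V} {u v w : V}
    (p : G.Walk u v) (h : G.Adj v w) (m : ℕ) :
    (p.concat h).getVert m = if m ≤ p.length then p.getVert m else w := by
  rw [Walk.concat_eq_append, Walk.getVert_append]
  rcases lt_trichotomy m p.length with h1 | h1 | h1
  · rw [if_pos h1, if_pos h1.le]
  · subst h1
    rw [if_neg (lt_irrefl _), if_pos le_rfl, Nat.sub_self]
    simp [Walk.getVert_zero, Walk.getVert_length]
  · rw [if_neg (by omega), if_neg (by omega)]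
    obtain ⟨n, hn⟩ : ∃ n, m - p.length = n + 1 := ⟨m - p.length - 1, by omega⟩
    rw [hn]
    simp [Walk.getVert]

private lemma aux_isPath_concat {V : Type} {G : SimpleGraph V} {u v w : V}
    (p : G.Walk u v) (h : G.Adj v w) (hp : p.IsPath) (hw : w ∉ p.support) :
    (p.concat h).IsPath := by
  rw [← Walk.isPath_reverse_iff, Walk.reverse_concat]
  exact Walk.IsPath.cons hp.reverse (by simpa [Walk.support_reverse] using hw)

/-- The layered reachability sets: `chainSet G S x col cc t` is the set of vertices `v ∈ S`
with colour `cc t` reachable from `x` by a path whose `s`-th vertex has colour `cc s`. -/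
private def chainSet {V α : Type} (G : SimpleGraph V) (S : Set V) (x : V)
    (col : V → α) (cc : ℕ → α) : ℕ → Set V
  | 0 => {v | v ∈ S ∧ G.Adj x v ∧ col v = cc 0}
  | (t + 1) => {v | v ∈ S ∧ (∃ u ∈ chainSet G S x col cc t, G.Adj u v) ∧ col v = cc (t + 1)}

private lemma chainSet_mem {V α : Type} {G : SimpleGraph V} {S : Set V} {x : V}
    {col : V → α} {cc : ℕ → α} (t : ℕ) (v : V)
    (hv : v ∈ chainSet G S x col cc t) : v ∈ S ∧ col v = cc t := by
  cases t with
  | zero => exact ⟨hv.1, hv.2.2⟩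
  | succ t => exact ⟨hv.1, hv.2.2⟩

/-- Existence of a colour-pattern path to any vertex of a chain set. -/
private lemma chainSet_walk {V α : Type} {G : SimpleGraph V} {S : Set V} {x : V}
    {col : V → α} {cc : ℕ → α} {i : ℕ}
    (hSx : ∀ v ∈ S, v ≠ x)
    (hccinj : ∀ t s, t < i → s < i → cc t = cc s → t = s) :
    ∀ t, t < i → ∀ v, v ∈ chainSet G S x col cc t → ∃ p : G.Walk x v, p.IsPath ∧
      p.length = t + 1 ∧ ∀ s, s ≤ t → p.getVert (s + 1) ∈ chainSet G S x col cc s := by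
  intro t
  induction t with
  | zero =>
    intro _ v hv
    refine ⟨Walk.cons hv.2.1 Walk.nil, ?_, rfl, ?_⟩
    · rw [Walk.cons_isPath_iff]
      refine ⟨Walk.IsPath.nil, ?_⟩
      simp only [Walk.support_nil, List.mem_singleton]
      exact fun h => hSx v hv.1 h.symm
    · intro s hs
      interval_cases s
      exact hv
  | succ t ih =>
    intro ht v hv
    obtain ⟨hvS, ⟨u, huA, huv⟩, hcolv⟩ := hv
    obtain ⟨p, hp, hlen, hget⟩ := ih (Nat.lt_of_succ_lt ht) u huA
    have hvns : v ∉ p.support := by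
      intro hmem
      rw [Walk.mem_support_iff_exists_getVert] at hmem
      obtain ⟨m, hm, hmle⟩ := hmem
      cases m with
      | zero =>
        rw [Walk.getVert_zero] at hm
        exact hSx v hvS hm.symm
      | succ m =>
        have hmA : p.getVert (m + 1) ∈ chainSet G S x col cc m := hget m (by omega)
        rw [hm] at hmA
        have hc1 : col v = cc m := (chainSet_mem m v hmA).2
        have : m = t + 1 := hccinj m (t + 1) (by omega) ht (by rw [← hc1, hcolv])
        omega
    refine ⟨p.concat huv, aux_isPath_concat p huv hp hvns, by simp [hlen], ?_⟩
    intro s hs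
    rw [aux_getVert_concat]
    rcases Nat.lt_or_ge s (t + 1) with h1 | h1
    · rw [if_pos (by omega)]
      exact hget s (by omega)
    · have hst : s = t + 1 := by omega
      subst hst
      rw [if_neg (by omega)]
      exact ⟨hvS, ⟨u, huA, huv⟩, hcolv⟩

/-- If the chain sets do not reach `N(y)`, the colours can be shifted along the layers to
produce a proper colouring of `G` with one extra colour. -/
private lemma chainSet_coloring {V α : Type} {G : SimpleGraph V} {S : Set V} {x y : V}
    {col : V → α} {cc : ℕ → α} {i : ℕ} (hi : 0 < i)
    (hxy : G.Adj x y)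
    (hSx : x ∉ S) (hSy : y ∉ S) (hSmem : ∀ v : V, v ≠ x → v ≠ y → v ∈ S)
    (hcolne : ∀ u w : V, u ∈ S → w ∈ S → G.Adj u w → col u ≠ col w)
    (hccinj : ∀ t s, t < i → s < i → cc t = cc s → t = s)
    (hcase : ¬∃ v, v ∈ chainSet G S x col cc (i - 1) ∧ G.Adj v y) :
    Nonempty (G.Coloring (α ⊕ Unit)) := by
  classical
  set A : ℕ → Set V := chainSet G S x col cc with hA
  have hSne : ∀ v ∈ S, v ≠ x ∧ v ≠ y := by
    intro v hv
    constructor <;> rintro rfl <;> [exact hSx hv; exact hSy hv]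
  have hAdisj : ∀ t s v, t < i → s < i → v ∈ A t → v ∈ A s → t = s := by
    intro t s v ht hs h1 h2
    exact hccinj t s ht hs (((chainSet_mem t v h1).2).symm.trans (chainSet_mem s v h2).2)
  set f : V → α ⊕ Unit := fun v =>
    if v = x then Sum.inl (cc 0)
    else if v = y then Sum.inr ()
    else if h : ∃ t, t < i ∧ v ∈ A t then
      (if Classical.choose h + 1 < i then Sum.inl (cc (Classical.choose h + 1)) else Sum.inr ())
    else Sum.inl (col v) with hf
  have hfx : f x = Sum.inl (cc 0) := by simp [hf]
  have hfy : f y = Sum.inr () := by simp [hf, hxy.ne']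
  have hfA : ∀ t v, t < i → v ∈ A t →
      f v = if t + 1 < i then Sum.inl (cc (t + 1)) else Sum.inr () := by
    intro t v ht hv
    have hvS := (chainSet_mem t v hv).1
    have hex : ∃ t', t' < i ∧ v ∈ A t' := ⟨t, ht, hv⟩
    have hchoose : Classical.choose hex = t :=
      hAdisj _ _ v (Classical.choose_spec hex).1 ht (Classical.choose_spec hex).2 hv
    simp only [hf]
    rw [if_neg (hSne v hvS).1, if_neg (hSne v hvS).2, dif_pos hex, hchoose]
  have hfother : ∀ v, v ∈ S → (¬∃ t, t < i ∧ v ∈ A t) → f v = Sum.inl (col v) := by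
    intro v hvS hne
    simp only [hf]
    rw [if_neg (hSne v hvS).1, if_neg (hSne v hvS).2, dif_neg hne]
  -- the core case: both endpoints in `S`
  have hcore : ∀ u w : V, u ∈ S → w ∈ S → G.Adj u w →
      (∃ t, t < i ∧ u ∈ A t) → f u = f w → False := by
    intro u w hu hw hadj hu' heq
    obtain ⟨t, ht, huA⟩ := hu'
    by_cases hw' : ∃ s, s < i ∧ w ∈ A s
    · obtain ⟨s, hs, hwA⟩ := hw'
      rw [hfA t u ht huA, hfA s w hs hwA] at heq
      have hts : t = s := by
        by_cases h1 : t + 1 < i <;> by_cases h2 : s + 1 < i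
        · rw [if_pos h1, if_pos h2] at heq
          have := hccinj (t + 1) (s + 1) h1 h2 (Sum.inl.inj heq)
          omega
        · rw [if_pos h1, if_neg h2] at heq; exact absurd heq (by simp)
        · rw [if_neg h1, if_pos h2] at heq; exact absurd heq (by simp)
        · omega
      exact hcolne u w hu hw hadj
        (((chainSet_mem t u huA).2).trans (hts ▸ ((chainSet_mem s w hwA).2).symm))
    · rw [hfA t u ht huA, hfother w hw hw'] at heq
      by_cases h1 : t + 1 < i
      · rw [if_pos h1] at heq
        have hcw : col w = cc (t + 1) := (Sum.inl.inj heq).symm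
        exact hw' ⟨t + 1, h1, hw, ⟨u, huA, hadj⟩, hcw⟩
      · rw [if_neg h1] at heq; exact absurd heq (by simp)
  have hvalid : ∀ ⦃u w : V⦄, G.Adj u w → f u ≠ f w := by
    -- first handle the case `u ∈ {x, y}`
    have hend : ∀ u w : V, G.Adj u w → (u = x ∨ u = y) → f u = f w → False := by
      rintro u w hadj (rfl | rfl) heq
      · -- u = x
        rcases eq_or_ne w y with rfl | hwy
        · rw [hfx, hfy] at heq; exact absurd heq (by simp)
        · have hwS : w ∈ S := hSmem w hadj.ne' hwy
          by_cases hw' : ∃ t, t < i ∧ w ∈ A t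
          · obtain ⟨t, ht, hwA⟩ := hw'
            rw [hfx, hfA t w ht hwA] at heq
            by_cases h1 : t + 1 < i
            · rw [if_pos h1] at heq
              have := hccinj 0 (t + 1) hi h1 (Sum.inl.inj heq)
              omega
            · rw [if_neg h1] at heq; exact absurd heq (by simp)
          · rw [hfx, hfother w hwS hw'] at heq
            have hcw : col w = cc 0 := (Sum.inl.inj heq).symm
            exact hw' ⟨0, hi, hwS, hadj, hcw⟩
      · -- u = y
        rcases eq_or_ne w x with rfl | hwx
        · rw [hfy, hfx] at heq; exact absurd heq (by simp)
        · have hwS : w ∈ S := hSmem w hwx hadj.ne'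
          by_cases hw' : ∃ t, t < i ∧ w ∈ A t
          · obtain ⟨t, ht, hwA⟩ := hw'
            rw [hfy, hfA t w ht hwA] at heq
            by_cases h1 : t + 1 < i
            · rw [if_pos h1] at heq; exact absurd heq (by simp)
            · have hti : t = i - 1 := by omega
              exact hcase ⟨w, hti ▸ hwA, hadj.symm⟩
          · rw [hfy, hfother w hwS hw'] at heq; exact absurd heq (by simp)
    intro u w hadj heq
    rcases eq_or_ne u x with hux | hux
    · exact hend u w hadj (Or.inl hux) heq
    rcases eq_or_ne u y with huy | huy
    · exact hend u w hadj (Or.inr huy) heq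
    rcases eq_or_ne w x with hwx | hwx
    · exact hend w u hadj.symm (Or.inl hwx) heq.symm
    rcases eq_or_ne w y with hwy | hwy
    · exact hend w u hadj.symm (Or.inr hwy) heq.symm
    have huS : u ∈ S := hSmem u hux huy
    have hwS : w ∈ S := hSmem w hwx hwy
    by_cases hu' : ∃ t, t < i ∧ u ∈ A t
    · exact hcore u w huS hwS hadj hu' heq
    by_cases hw' : ∃ t, t < i ∧ w ∈ A t
    · exact hcore w u hwS huS hadj.symm hw' heq.symm
    rw [hfother u huS hu', hfother w hwS hw'] at heq
    exact hcolne u w huS hwS hadj (Sum.inl.inj heq)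
  exact ⟨Coloring.mk f (fun hadj => hvalid hadj)⟩

/-- Kempe-chain path lemma: for every edge `xy` of a non-complete double-critical
`k`-chromatic graph `G`, every proper `(k-2)`-colouring `φ` of `G - x - y`, and every
non-empty sequence `j : Fin i → Fin (k-2)` of pairwise distinct colours, there is a path
in `G` of order `i + 2` (i.e. of length `i + 1`) from `x` to `y` whose `t`-th vertex after
`x` has colour `j t` under `φ`. -/
theorem stmt2 {V : Type} [Fintype V] (G : SimpleGraph V) (k : ℕ)
    (hnc : G ≠ ⊤) (hdc : DoubleCritical G) (hchrom : G.chromaticNumber = k)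
    (x y : V) (hxy : G.Adj x y)
    (φ : (G.induce ({x, y}ᶜ : Set V)).Coloring (Fin (k - 2)))
    (i : ℕ) (hi : 1 ≤ i) (j : Fin i → Fin (k - 2)) (hj : Function.Injective j) :
    ∃ p : G.Walk x y, p.IsPath ∧ p.length = i + 1 ∧
      ∀ t : Fin i, ∃ h : p.getVert (t.1 + 1) ∈ ({x, y}ᶜ : Set V),
        φ ⟨p.getVert (t.1 + 1), h⟩ = j t := by
  classical
  have hk2 : 0 < k - 2 := (Nat.zero_le _).trans_lt (j ⟨0, hi⟩).isLt
  have hmemS : ∀ v : V, v ∈ ({x, y}ᶜ : Set V) ↔ v ≠ x ∧ v ≠ y := by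
    intro v
    simp [not_or]
  have hSx : x ∉ ({x, y}ᶜ : Set V) := fun h => ((hmemS x).1 h).1 rfl
  have hSy : y ∉ ({x, y}ᶜ : Set V) := fun h => ((hmemS y).1 h).2 rfl
  set col : V → Fin (k - 2) := fun v => if h : v ∈ ({x, y}ᶜ : Set V) then φ ⟨v, h⟩ else j ⟨0, hi⟩ with hcol
  have hcolval : ∀ v (h : v ∈ ({x, y}ᶜ : Set V)), col v = φ ⟨v, h⟩ := fun v h => dif_pos h
  have hcolne : ∀ u w : V, u ∈ ({x, y}ᶜ : Set V) → w ∈ ({x, y}ᶜ : Set V) → G.Adj u w → col u ≠ col w := by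
    intro u w hu hw hadj
    rw [hcolval u hu, hcolval w hw]
    exact φ.valid (by simpa [comap_adj] using hadj)
  set cc : ℕ → Fin (k - 2) := fun t => if h : t < i then j ⟨t, h⟩ else j ⟨0, hi⟩ with hcc
  have hccval : ∀ (t : ℕ) (h : t < i), cc t = j ⟨t, h⟩ := fun t h => dif_pos h
  have hccinj : ∀ t s, t < i → s < i → cc t = cc s → t = s := by
    intro t s ht hs h
    rw [hccval t ht, hccval s hs] at h
    exact Fin.mk.inj_iff.mp (hj h)
  by_cases hcase : ∃ v, v ∈ chainSet G ({x, y}ᶜ : Set V) x col cc (i - 1) ∧ G.Adj v y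
  · -- the path exists
    obtain ⟨v, hvA, hvy⟩ := hcase
    obtain ⟨p, hp, hlen, hget⟩ :=
      chainSet_walk (fun v hv => ((hmemS v).1 hv).1) hccinj (i - 1) (by omega) v hvA
    have hyns : y ∉ p.support := by
      intro hmem
      rw [Walk.mem_support_iff_exists_getVert] at hmem
      obtain ⟨m, hm, hmle⟩ := hmem
      cases m with
      | zero =>
        rw [Walk.getVert_zero] at hm
        exact hxy.ne hm
      | succ m =>
        have hmA : p.getVert (m + 1) ∈ chainSet G ({x, y}ᶜ : Set V) x col cc m := hget m (by omega)
        rw [hm] at hmA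
        exact hSy (chainSet_mem m y hmA).1
    refine ⟨p.concat hvy, aux_isPath_concat p hvy hp hyns, ?_, ?_⟩
    · rw [Walk.length_concat, hlen]; omega
    · intro t
      have htlt : t.1 + 1 ≤ p.length := by rw [hlen]; omega
      have hgv : (p.concat hvy).getVert (t.1 + 1) = p.getVert (t.1 + 1) := by
        rw [aux_getVert_concat, if_pos htlt]
      have hmA : p.getVert (t.1 + 1) ∈ chainSet G ({x, y}ᶜ : Set V) x col cc t.1 := hget t.1 (by omega)
      have hmS : p.getVert (t.1 + 1) ∈ ({x, y}ᶜ : Set V) := (chainSet_mem t.1 _ hmA).1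
      have hmc : col (p.getVert (t.1 + 1)) = cc t.1 := (chainSet_mem t.1 _ hmA).2
      rw [hgv]
      refine ⟨hmS, ?_⟩
      rw [← hcolval _ hmS, hmc, hccval t.1 t.2]
  · -- contradiction via a (k-1)-colouring
    exfalso
    obtain ⟨C⟩ := chainSet_coloring (by omega : 0 < i) hxy hSx hSy
      (fun v h1 h2 => (hmemS v).2 ⟨h1, h2⟩) hcolne hccinj hcase
    have hcolorable : G.Colorable (k - 1) := by
      have h1 := C.colorable
      have hcard : Fintype.card (Fin (k - 2) ⊕ Unit) = k - 1 := by
        simp; omega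
      rwa [hcard] at h1
    have hle := hcolorable.chromaticNumber_le
    rw [hchrom] at hle
    have : k ≤ k - 1 := by exact_mod_cast hle
    omega
end

section
/- Let G be a non-complete double-critical k-chromatic graph. For every edge xy of G and every proper (k−2)-colouring of G − x − y, every one of the k−2 colours is assigned to at least one common neighbour of x and y; in particular, x and y have at least k−2 common neighbours, so the edge xy lies in at least k−2 triangles of G. -/
open SimpleGraph

/-- For every edge `xy` of a non-complete double-critical `k`-chromatic graph `G` and every
proper `(k-2)`-colouring of `G - x - y`, every one of the `k-2` colours is assigned to at
least one common neighbour of `x` and `y`; in particular `x` and `y` have at least `k-2`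
common neighbours, i.e. the edge `xy` lies in at least `k-2` triangles. -/
theorem stmt3 {V : Type} [Fintype V] (G : SimpleGraph V) (k : ℕ)
    (hnc : G ≠ ⊤) (hdc : DoubleCritical G) (hchrom : G.chromaticNumber = k)
    (x y : V) (hxy : G.Adj x y) :
    (∀ φ : (G.induce ({x, y}ᶜ : Set V)).Coloring (Fin (k - 2)),
      ∀ c : Fin (k - 2), ∃ z : V, ∃ hz : z ∈ ({x, y}ᶜ : Set V),
        G.Adj x z ∧ G.Adj y z ∧ φ ⟨z, hz⟩ = c) ∧
    k - 2 ≤ (G.neighborSet x ∩ G.neighborSet y).ncard := by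
  classical
  have hmem : ∀ z : V, z ≠ x → z ≠ y → z ∈ ({x, y}ᶜ : Set V) := by
    intro z h1 h2; simp [h1, h2]
  have hpart1 : ∀ φ : (G.induce ({x, y}ᶜ : Set V)).Coloring (Fin (k - 2)),
      ∀ c : Fin (k - 2), ∃ z : V, ∃ hz : z ∈ ({x, y}ᶜ : Set V),
        G.Adj x z ∧ G.Adj y z ∧ φ ⟨z, hz⟩ = c := by
    intro φ c
    by_contra hcon
    push_neg at hcon
    have hk3 : 3 ≤ k := by have := c.isLt; omega
    -- recolouring of G with n+1 colours
    let f : V → Fin (k - 2 + 1) := fun v =>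
      if hvx : v = x then Fin.last (k - 2)
      else if hvy : v = y then c.castSucc
      else if φ ⟨v, hmem v hvx hvy⟩ = c ∧ G.Adj y v then Fin.last (k - 2)
      else (φ ⟨v, hmem v hvx hvy⟩).castSucc
    have hφne : ∀ (u v : V) (hu : u ∈ ({x, y}ᶜ : Set V)) (hv : v ∈ ({x, y}ᶜ : Set V)),
        G.Adj u v → φ ⟨u, hu⟩ ≠ φ ⟨v, hv⟩ := by
      intro u v hu hv h
      exact φ.valid (by simp [h])
    have hne1 : ∀ d : Fin (k - 2), Fin.last (k - 2) ≠ d.castSucc := fun d => (Fin.castSucc_lt_last d).ne'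
    have hvalid : ∀ u v : V, G.Adj u v → f u ≠ f v := by
      intro u v h hfeq
      by_cases hux : u = x
      · by_cases hvx : v = x
        · exact G.ne_of_adj h (hux.trans hvx.symm)
        · by_cases hvy : v = y
          · simp only [f, dif_pos hux, dif_neg hvx, dif_pos hvy] at hfeq
            exact hne1 c hfeq
          · by_cases hb : φ ⟨v, hmem v hvx hvy⟩ = c ∧ G.Adj y v
            · have hxv : G.Adj x v := by rwa [hux] at h
              exact hcon v (hmem v hvx hvy) hxv hb.2 hb.1
            · simp only [f, dif_pos hux, dif_neg hvx, dif_neg hvy, if_neg hb] at hfeq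
              exact hne1 _ hfeq
      · by_cases huy : u = y
        · by_cases hvx : v = x
          · simp only [f, dif_neg hux, dif_pos huy, dif_pos hvx] at hfeq
            exact hne1 c hfeq.symm
          · by_cases hvy : v = y
            · exact G.ne_of_adj h (huy.trans hvy.symm)
            · by_cases hb : φ ⟨v, hmem v hvx hvy⟩ = c ∧ G.Adj y v
              · simp only [f, dif_neg hux, dif_pos huy, dif_neg hvx, dif_neg hvy,
                  if_pos hb] at hfeq
                exact hne1 _ hfeq.symm
              · have hbv : φ ⟨v, hmem v hvx hvy⟩ ≠ c := fun hc => hb ⟨hc, huy ▸ h⟩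
                simp only [f, dif_neg hux, dif_pos huy, dif_neg hvx, dif_neg hvy,
                  if_neg hb] at hfeq
                exact hbv (Fin.castSucc_injective (k - 2) hfeq.symm)
        · -- u is neither x nor y
          by_cases hvx : v = x
          · by_cases hb : φ ⟨u, hmem u hux huy⟩ = c ∧ G.Adj y u
            · have hxu : G.Adj x u := by have h' := h.symm; rwa [hvx] at h'
              exact hcon u (hmem u hux huy) hxu hb.2 hb.1
            · simp only [f, dif_neg hux, dif_neg huy, dif_pos hvx, if_neg hb] at hfeq
              exact hne1 _ hfeq.symm
          · by_cases hvy : v = y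
            · by_cases hb : φ ⟨u, hmem u hux huy⟩ = c ∧ G.Adj y u
              · simp only [f, dif_neg hux, dif_neg huy, dif_neg hvx, dif_pos hvy, if_pos hb] at hfeq
                exact hne1 _ hfeq
              · have hbu : φ ⟨u, hmem u hux huy⟩ ≠ c := fun hc => hb ⟨hc, hvy ▸ h.symm⟩
                simp only [f, dif_neg hux, dif_neg huy, dif_neg hvx, dif_pos hvy, if_neg hb] at hfeq
                exact hbu (Fin.castSucc_injective (k - 2) hfeq)
            · -- both u, v neither x nor y
              have hφuv := hφne u v (hmem u hux huy) (hmem v hvx hvy) h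
              by_cases hbu : φ ⟨u, hmem u hux huy⟩ = c ∧ G.Adj y u
              · by_cases hbv : φ ⟨v, hmem v hvx hvy⟩ = c ∧ G.Adj y v
                · exact hφuv (hbu.1.trans hbv.1.symm)
                · simp only [f, dif_neg hux, dif_neg huy, dif_neg hvx, dif_neg hvy,
                    if_pos hbu, if_neg hbv] at hfeq
                  exact hne1 _ hfeq
              · by_cases hbv : φ ⟨v, hmem v hvx hvy⟩ = c ∧ G.Adj y v
                · simp only [f, dif_neg hux, dif_neg huy, dif_neg hvx, dif_neg hvy,
                    if_neg hbu, if_pos hbv] at hfeq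
                  exact hne1 _ hfeq.symm
                · simp only [f, dif_neg hux, dif_neg huy, dif_neg hvx, dif_neg hvy,
                    if_neg hbu, if_neg hbv] at hfeq
                  exact hφuv (Fin.castSucc_injective (k - 2) hfeq)
    have hcol : G.Colorable (k - 2 + 1) := ⟨⟨f, fun {u v} h => hvalid u v h⟩⟩
    have hle : G.chromaticNumber ≤ (k - 2 + 1 : ℕ) := chromaticNumber_le_iff_colorable.mpr hcol
    rw [hchrom] at hle
    have : k ≤ k - 2 + 1 := by exact_mod_cast hle
    omega
  refine ⟨hpart1, ?_⟩
  rcases Nat.lt_or_ge k 3 with hk | hk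
  · omega
  · have h2 := hdc.2 x y hxy
    rw [hchrom] at h2
    have hfin : (G.induce ({x, y}ᶜ : Set V)).chromaticNumber ≠ ⊤ := by
      rw [chromaticNumber_ne_top_iff_exists]
      exact ⟨_, (G.induce ({x, y}ᶜ : Set V)).colorable_of_fintype⟩
    lift (G.induce ({x, y}ᶜ : Set V)).chromaticNumber to ℕ using hfin with m hm
    have hmk : m + 2 ≤ k := by exact_mod_cast h2
    have hcol : (G.induce ({x, y}ᶜ : Set V)).Colorable (k - 2) :=
      chromaticNumber_le_iff_colorable.mp (by rw [← hm]; exact Nat.cast_le.mpr (by omega))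
    obtain ⟨φ⟩ := hcol
    choose z hz hax hay hφz using hpart1 φ
    have hginj : Function.Injective
        (fun c : Fin (k - 2) => (⟨z c, ⟨hax c, hay c⟩⟩ :
          ↥(G.neighborSet x ∩ G.neighborSet y))) := by
      intro c c' hcc
      have hzz : z c = z c' := congrArg Subtype.val hcc
      have heq : (⟨z c, hz c⟩ : ({x, y}ᶜ : Set V)) = ⟨z c', hz c'⟩ := Subtype.ext hzz
      rw [← hφz c, ← hφz c', heq]
    have hcard := Nat.card_le_card_of_injective _ hginj
    have hfc : k - 2 = Nat.card (Fin (k - 2)) := by simp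
    rw [hfc, ← Nat.card_coe_set_eq]
    exact hcard
end

section
/- If G is a non-complete double-critical k-chromatic graph, then there exists at least one edge xy of G such that the set D(xy) = V(G) \ (N(x) ∪ N(y)) is non-empty, i.e. some vertex of G is adjacent to neither x nor y and distinct from both. -/
open SimpleGraph

/-- In a non-complete double-critical `k`-chromatic graph `G`, there exists an edge `xy`
such that `D(xy) = V(G) \ (N(x) ∪ N(y))` is non-empty: some vertex `z` is distinct from
both `x` and `y` and adjacent to neither. -/
theorem stmt5 {V : Type} [Fintype V] (G : SimpleGraph V) (k : ℕ)
    (hnc : G ≠ ⊤) (hdc : DoubleCritical G) (hchrom : G.chromaticNumber = k) :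
    ∃ x y : V, G.Adj x y ∧ ∃ z : V, z ≠ x ∧ z ≠ y ∧ ¬ G.Adj x z ∧ ¬ G.Adj y z := by
  classical
  by_contra h
  push_neg at h
  -- h : ∀ x y, G.Adj x y → ∀ z, z ≠ x → z ≠ y → ¬G.Adj x z → G.Adj y z
  -- Step 1: get two distinct non-adjacent vertices
  obtain ⟨u, v, huv, hnadj⟩ : ∃ u v : V, u ≠ v ∧ ¬ G.Adj u v := by
    by_contra hc
    push_neg at hc
    apply hnc
    ext a b
    simp only [top_adj]
    exact ⟨G.ne_of_adj, hc a b⟩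
  -- Step 2: N(u) ⊆ N(v)
  have hN : ∀ w, G.Adj u w → G.Adj v w := by
    intro w hw
    have hvw : v ≠ w := by
      rintro rfl; exact hnadj hw
    have := h u w hw v (Ne.symm huv) hvw hnadj
    exact this.symm
  -- Step 3: extend a coloring of G - u to G using color of v
  set Gu := G.induce ({u}ᶜ : Set V) with hGu
  have hlt : Gu.chromaticNumber < G.chromaticNumber := hdc.1 u
  set m := Gu.chromaticNumber.toNat with hm
  have hcol : Gu.Colorable m := Gu.colorable_chromaticNumber_of_fintype
  have hne : Gu.chromaticNumber ≠ ⊤ := by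
    rw [hchrom] at hlt
    exact (hlt.trans (WithTop.coe_lt_top k)).ne
  have hcoe : (m : ℕ∞) = Gu.chromaticNumber := ENat.coe_toNat hne
  obtain ⟨C⟩ := hcol
  have hvmem : v ∈ ({u}ᶜ : Set V) := by simp [Ne.symm huv]
  let f : V → Fin m := fun w =>
    if hw : w = u then C ⟨v, hvmem⟩ else C ⟨w, by simpa using hw⟩
  have hC : G.Colorable m := by
    refine ⟨Coloring.mk f ?_⟩
    intro a b hab
    have hab' : a ≠ b := G.ne_of_adj hab
    by_cases ha : a = u
    · have hab2 : G.Adj u b := ha ▸ hab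
      have hb : b ≠ u := fun e => hab' (ha.trans e.symm)
      have hadj : Gu.Adj ⟨v, hvmem⟩ ⟨b, by simpa using hb⟩ := by
        simp only [hGu, comap_adj, Function.Embedding.coe_subtype]
        exact hN b hab2
      simp only [f, dif_pos ha, dif_neg hb]
      exact C.valid hadj
    · by_cases hb : b = u
      · have hab2 : G.Adj u a := hb ▸ hab.symm
        have hadj : Gu.Adj ⟨a, by simpa using ha⟩ ⟨v, hvmem⟩ := by
          simp only [hGu, comap_adj, Function.Embedding.coe_subtype]
          exact (hN a hab2).symm
        simp only [f, dif_neg ha, dif_pos hb]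
        exact C.valid hadj
      · have hadj : Gu.Adj ⟨a, by simpa using ha⟩ ⟨b, by simpa using hb⟩ := by
          simp only [hGu, comap_adj, Function.Embedding.coe_subtype]
          exact hab
        simp only [f, dif_neg ha, dif_neg hb]
        exact C.valid hadj
  have hle : G.chromaticNumber ≤ m := hC.chromaticNumber_le
  have : G.chromaticNumber < G.chromaticNumber :=
    lt_of_le_of_lt (hle.trans_eq hcoe) hlt
  exact absurd this (lt_irrefl _)
end

section
/- Let G be a non-complete double-critical k-chromatic graph and let xy be an edge of G such that A(xy) = N(x) \ N[y] is non-empty. Then the subgraph of G induced by A(xy) has minimum degree at least 1, i.e. every vertex of A(xy) is adjacent to another vertex of A(xy). -/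
open SimpleGraph

/-!
If some `a ∈ A(xy)` had no neighbour in `A(xy)`, double-criticality at the edge `xa` gives a
`(k - 2)`-colouring of `G - x - a`. Give `x` a new colour and `a` the colour of `y`. The
neighbours of `a` sharing that colour are not adjacent to `y`, hence not to `x` either (they
would lie in `A(xy)`), so they can be moved into the new colour class of `x`: this
`(k - 1)`-colours `G`.
-/

namespace SimpleGraph

variable {V V' α : Type*} {G : SimpleGraph V} {H : SimpleGraph V'}

theorem chromaticNumber_le_add_one_of_forall_colorable
    (h : ∀ n, H.Colorable n → G.Colorable (n + 1)) :
    G.chromaticNumber ≤ H.chromaticNumber + 1 := by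
  by_cases hH : H.chromaticNumber = ⊤
  · simp [hH]
  · have hG := (h _ (colorable_of_chromaticNumber_ne_top hH)).chromaticNumber_le
    rwa [Nat.cast_add_one, ENat.natCast_toNat hH] at hG

theorem nonempty_coloring_option_of_proper_off_pair {x a : V} (col : V → α)
    (hcol : ∀ u v, u ≠ x → u ≠ a → v ≠ x → v ≠ a → G.Adj u v → col u ≠ col v)
    (hx : ∀ v, v ≠ x → v ≠ a → col v = col a → G.Adj x v → ¬ G.Adj a v) :
    Nonempty (G.Coloring (Option α)) := by
  classical
  -- `none` is the new colour, shared by `x` and the neighbours of `a` coloured like `a`.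
  let f : V → Option α := fun v =>
    if v = x ∨ (G.Adj a v ∧ col v = col a) then none else some (col v)
  refine ⟨Coloring.mk f fun {u v} huv hf => ?_⟩
  by_cases hu : u = x ∨ (G.Adj a u ∧ col u = col a) <;>
    by_cases hv : v = x ∨ (G.Adj a v ∧ col v = col a) <;>
    simp only [f, hu, hv, if_true, if_false, reduceCtorEq, Option.some.injEq] at hf
  · rcases hu with rfl | ⟨hau, hcu⟩ <;> rcases hv with rfl | ⟨hav, hcv⟩
    · exact huv.ne rfl
    · exact hx v huv.ne' hav.ne' hcv huv hav
    · exact hx u huv.ne hau.ne' hcu huv.symm hau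
    · rcases eq_or_ne u x with rfl | hux
      · exact hx v huv.ne' hav.ne' hcv huv hav
      rcases eq_or_ne v x with rfl | hvx
      · exact hx u huv.ne hau.ne' hcu huv.symm hau
      exact hcol u v hux hau.ne' hvx hav.ne' huv (hcu.trans hcv.symm)
  · push Not at hu hv
    rcases eq_or_ne u a with rfl | hua
    · exact hv.2 huv hf.symm
    rcases eq_or_ne v a with rfl | hva
    · exact hu.2 huv.symm hf
    exact hcol u v hu.1 hua hv.1 hva huv hf

theorem nonempty_coloring_option_of_induce_compl_pair {x a : V}
    (C : (G.induce ({x, a}ᶜ : Set V)).Coloring α) (c : α)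
    (hc : ∀ v : ({x, a}ᶜ : Set V), C v = c → G.Adj x v → ¬ G.Adj a v) :
    Nonempty (G.Coloring (Option α)) := by
  classical
  let col : V → α := fun v => if hv : v ∈ ({x, a}ᶜ : Set V) then C ⟨v, hv⟩ else c
  have hmem : ∀ v, v ≠ x → v ≠ a → v ∈ ({x, a}ᶜ : Set V) := fun v hvx hva => by
    simp [hvx, hva]
  have hcol : ∀ v (hv : v ∈ ({x, a}ᶜ : Set V)), col v = C ⟨v, hv⟩ :=
    fun _ hv => dif_pos hv
  have hcola : col a = c := by simp [col]
  refine nonempty_coloring_option_of_proper_off_pair (x := x) (a := a) col ?_ ?_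
  · intro u v hux hua hvx hva huv
    rw [hcol u (hmem u hux hua), hcol v (hmem v hvx hva)]
    exact C.valid (show (G.induce _).Adj ⟨u, _⟩ ⟨v, _⟩ from huv)
  · intro v hvx hva
    rw [hcol v (hmem v hvx hva), hcola]
    exact hc ⟨v, _⟩

end SimpleGraph

theorem stmt6_general {V : Type} (G : SimpleGraph V) (k : ℕ)
    (hdc : DoubleCritical G) (hchrom : G.chromaticNumber = k)
    (x y : V) (hxy : G.Adj x y) :
    ∀ a ∈ G.neighborSet x \ (G.neighborSet y ∪ {y}),
      ∃ b ∈ G.neighborSet x \ (G.neighborSet y ∪ {y}), b ≠ a ∧ G.Adj a b := by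
  intro a ha
  by_contra! hiso
  simp only [Set.mem_sdiff, mem_neighborSet, Set.mem_union, Set.mem_singleton_iff, not_or]
    at ha hiso
  obtain ⟨hxa, hya, hay⟩ := ha
  have hy : y ∈ ({x, a}ᶜ : Set V) := by simp [hxy.ne', Ne.symm hay]
  have hcol : ∀ n, (G.induce ({x, a}ᶜ : Set V)).Colorable n → G.Colorable (n + 1) := by
    rintro n ⟨C⟩
    have hc : ∀ v, C v = C ⟨y, hy⟩ → G.Adj x v → ¬ G.Adj a v := by
      intro v hv hxv hav
      have hvy : v.1 ≠ y := by rintro rfl; exact hya hav.symm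
      have hyv : ¬ G.Adj y v := fun hyv =>
        C.valid (show (G.induce _).Adj ⟨y, hy⟩ v from hyv) hv.symm
      exact hiso v ⟨hxv, hyv, hvy⟩ hav.ne' hav
    obtain ⟨D⟩ := nonempty_coloring_option_of_induce_compl_pair C _ hc
    simpa using D.colorable
  have h2 := hdc.2 x a hxa
  have hfin : (G.induce ({x, a}ᶜ : Set V)).chromaticNumber ≠ ⊤ :=
    (le_self_add.trans (h2.trans hchrom.le)).trans_lt (ENat.natCast_lt_top k) |>.ne
  have := h2.trans (chromaticNumber_le_add_one_of_forall_colorable hcol)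
  rw [ENat.add_le_add_iff_left hfin] at this
  exact absurd this (by decide)

/-- Let `G` be a non-complete double-critical `k`-chromatic graph and `xy` an edge of `G`
such that `A(xy) = N(x) \ N[y]` is non-empty. Then every vertex of `A(xy)` is adjacent
to another vertex of `A(xy)`, i.e. `G[A(xy)]` has minimum degree at least `1`. -/
theorem stmt6 {V : Type} [Fintype V] (G : SimpleGraph V) (k : ℕ)
    (hnc : G ≠ ⊤) (hdc : DoubleCritical G) (hchrom : G.chromaticNumber = k)
    (x y : V) (hxy : G.Adj x y)
    (hA : (G.neighborSet x \ (G.neighborSet y ∪ {y})).Nonempty) :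
    ∀ a ∈ G.neighborSet x \ (G.neighborSet y ∪ {y}),
      ∃ b ∈ G.neighborSet x \ (G.neighborSet y ∪ {y}), b ≠ a ∧ G.Adj a b :=
  stmt6_general G k hdc hchrom x y hxy
end

section
/- Let G be a non-complete double-critical k-chromatic graph and let x be any vertex of G. Let α_x denote the independence number of the subgraph of G induced by the neighbourhood N(x). Then 2 ≤ α_x and deg(x) − α_x ≥ k − 1 (so α_x ≤ deg(x) − k + 1). -/
open SimpleGraph

section Helpers

variable {V : Type}

lemma mem_pairCompl {x y v : V} (hx : v ≠ x) (hy : v ≠ y) :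
    v ∈ ({x, y}ᶜ : Set V) := by simp [hx, hy]

lemma mem_singCompl {x v : V} (hx : v ≠ x) : v ∈ ({x}ᶜ : Set V) := by simp [hx]

lemma rainbow (G : SimpleGraph V) {x y : V} (hxy : G.Adj x y) {n : ℕ}
    (c : (G.induce ({x, y}ᶜ : Set V)).Coloring (Fin n))
    (hG : ¬ G.Colorable (n + 1)) (i : Fin n) :
    ∃ (v : V) (hv : v ∈ ({x, y}ᶜ : Set V)), G.Adj x v ∧ G.Adj y v ∧ c ⟨v, hv⟩ = i := by
  classical
  by_contra hcon
  push_neg at hcon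
  apply hG
  refine ⟨Coloring.mk (fun v => if hvx : v = x then Fin.last n
    else if hvy : v = y then i.castSucc
    else if G.Adj y v ∧ c ⟨v, mem_pairCompl hvx hvy⟩ = i then Fin.last n
    else (c ⟨v, mem_pairCompl hvx hvy⟩).castSucc) ?_⟩
  intro u v hadj
  have hlast : ∀ j : Fin n, j.castSucc ≠ Fin.last n := fun j => (Fin.castSucc_lt_last j).ne
  by_cases hux : u = x
  · by_cases hvx : v = x
    · exact absurd hadj (by rw [hux, hvx]; exact G.irrefl)
    · by_cases hvy : v = y
      · simp only [dif_pos hux, dif_neg hvx, dif_pos hvy]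
        exact (hlast i).symm
      · simp only [dif_pos hux, dif_neg hvx, dif_neg hvy]
        rw [if_neg]
        · exact (hlast _).symm
        · rintro ⟨h1, h2⟩
          exact hcon v (mem_pairCompl hvx hvy) (hux ▸ hadj) h1 h2
  · by_cases huy : u = y
    · by_cases hvx : v = x
      · simp only [dif_neg hux, dif_pos huy, dif_pos hvx]
        exact hlast i
      · by_cases hvy : v = y
        · exact absurd hadj (by rw [huy, hvy]; exact G.irrefl)
        · simp only [dif_neg hux, dif_pos huy, dif_neg hvx, dif_neg hvy]
          by_cases hc : G.Adj y v ∧ c ⟨v, mem_pairCompl hvx hvy⟩ = i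
          · rw [if_pos hc]; exact hlast i
          · rw [if_neg hc]
            intro h
            exact hc ⟨huy ▸ hadj, (Fin.castSucc_injective n h).symm⟩
    · by_cases hvx : v = x
      · simp only [dif_neg hux, dif_neg huy, dif_pos hvx]
        rw [if_neg]
        · exact hlast _
        · rintro ⟨h1, h2⟩
          exact hcon u (mem_pairCompl hux huy) (hvx ▸ hadj.symm) h1 h2
      · by_cases hvy : v = y
        · simp only [dif_neg hux, dif_neg huy, dif_neg hvx, dif_pos hvy]
          by_cases hc : G.Adj y u ∧ c ⟨u, mem_pairCompl hux huy⟩ = i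
          · rw [if_pos hc]; exact (hlast i).symm
          · rw [if_neg hc]
            intro h
            exact hc ⟨hvy ▸ hadj.symm, Fin.castSucc_injective n h⟩
        · simp only [dif_neg hux, dif_neg huy, dif_neg hvx, dif_neg hvy]
          have hadj' : (G.induce ({x, y}ᶜ : Set V)).Adj ⟨u, mem_pairCompl hux huy⟩
              ⟨v, mem_pairCompl hvx hvy⟩ := hadj
          have hcc := c.valid hadj'
          by_cases hcu : G.Adj y u ∧ c ⟨u, mem_pairCompl hux huy⟩ = i
          · rw [if_pos hcu]
            by_cases hcv : G.Adj y v ∧ c ⟨v, mem_pairCompl hvx hvy⟩ = i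
            · rw [if_pos hcv]
              exact absurd (hcu.2.trans hcv.2.symm) hcc
            · rw [if_neg hcv]; exact (hlast _).symm
          · rw [if_neg hcu]
            by_cases hcv : G.Adj y v ∧ c ⟨v, mem_pairCompl hvx hvy⟩ = i
            · rw [if_pos hcv]; exact hlast _
            · rw [if_neg hcv]
              exact fun h => hcc (Fin.castSucc_injective n h)


lemma clique_card_le (G : SimpleGraph V) (s : Set V) (t : Finset V)
    (hts : ∀ a ∈ t, a ∈ s) (hcl : (t : Set V).Pairwise G.Adj) {n : ℕ}
    (hc : (G.induce s).Colorable n) : t.card ≤ n := by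
  classical
  set t' : Finset s := t.attach.map
    ⟨fun a => ⟨a.1, hts a.1 a.2⟩, fun a b h => Subtype.ext (congrArg Subtype.val h : (a:V) = b)⟩ with ht'
  have hclique : (G.induce s).IsClique ↑t' := by
    intro a ha b hb hne
    simp only [ht', Finset.coe_map, Set.mem_image, Finset.mem_coe, Finset.mem_attach] at ha hb
    obtain ⟨a0, -, ha0⟩ := ha
    obtain ⟨b0, -, hb0⟩ := hb
    have ha1 : (a : V) ∈ t := by rw [← ha0]; exact a0.2
    have hb1 : (b : V) ∈ t := by rw [← hb0]; exact b0.2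
    have : G.Adj a b := hcl ha1 hb1 (fun h => hne (Subtype.ext h))
    exact this
  have hle := hclique.card_le_of_colorable hc
  rwa [Finset.card_map, Finset.card_attach] at hle

end Helpers

/-- The independence number of the subgraph of `G` induced by a set `s` of vertices:
the largest cardinality of a subset of `s` whose vertices are pairwise non-adjacent. -/
noncomputable def indepNumOn {V : Type} (G : SimpleGraph V) (s : Set V) : ℕ :=
  sSup {n : ℕ | ∃ t : Finset V, ↑t ⊆ s ∧ t.card = n ∧
    (t : Set V).Pairwise (fun a b => ¬ G.Adj a b)}

/-- For every vertex `x` of a non-complete double-critical `k`-chromatic graph `G`, the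
independence number `α_x` of the subgraph induced by `N(x)` satisfies `2 ≤ α_x` and
`deg(x) - α_x ≥ k - 1`. -/
theorem stmt8 {V : Type} [Fintype V] (G : SimpleGraph V) [DecidableRel G.Adj] (k : ℕ)
    (hnc : G ≠ ⊤) (hdc : DoubleCritical G) (hchrom : G.chromaticNumber = k) (x : V) :
    2 ≤ indepNumOn G (G.neighborSet x) ∧
    indepNumOn G (G.neighborSet x) + (k - 1) ≤ G.degree x := by
  classical
  -- the set defining the independence number
  set S := {n : ℕ | ∃ t : Finset V, ↑t ⊆ (G.neighborSet x) ∧ t.card = n ∧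
    (t : Set V).Pairwise (fun a b => ¬ G.Adj a b)} with hS
  have hbdd : BddAbove S := ⟨Fintype.card V, by
    rintro n ⟨t, -, hc, -⟩
    exact hc ▸ t.card_le_univ⟩
  -- lifting chromatic numbers of vertex-deleted graphs
  have hcritv : ∀ v : V, ∃ m : ℕ, m < k ∧ (G.induce ({v}ᶜ : Set V)).Colorable m := by
    intro v
    have hcrit := hdc.1 v
    rw [hchrom] at hcrit
    have hm := ENat.coe_toNat (ne_top_of_lt hcrit)
    refine ⟨(G.induce ({v}ᶜ : Set V)).chromaticNumber.toNat, ?_,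
      chromaticNumber_le_iff_colorable.mp (le_of_eq hm.symm)⟩
    rw [← hm] at hcrit
    exact_mod_cast hcrit
  -- x has a neighbour
  have hy0 : ∃ y, G.Adj x y := by
    by_contra h
    push_neg at h
    obtain ⟨m, hmk, hcol⟩ := hcritv x
    rcases Nat.eq_zero_or_pos m with hm0 | hm0
    · subst hm0
      have hemp : IsEmpty ({x}ᶜ : Set V) :=
        (G.induce ({x}ᶜ : Set V)).isEmpty_of_colorable_zero hcol
      have hall : ∀ v : V, v = x := by
        intro v
        by_contra hvx
        exact hemp.false ⟨v, mem_singCompl hvx⟩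
      apply hnc
      ext u v
      rw [hall u, hall v]
      simp
    · obtain ⟨c⟩ := hcol
      have : G.Colorable m := by
        refine ⟨Coloring.mk (fun v => if hv : v = x then ⟨0, hm0⟩
          else c ⟨v, mem_singCompl hv⟩) ?_⟩
        intro u v hadj
        by_cases hux : u = x
        · exact absurd (hux ▸ hadj) (h v)
        · by_cases hvx : v = x
          · exact absurd (hvx ▸ hadj.symm) (h u)
          · simp only [dif_neg hux, dif_neg hvx]
            exact c.valid (hadj :
              (G.induce ({x}ᶜ : Set V)).Adj ⟨u, mem_singCompl hux⟩ ⟨v, mem_singCompl hvx⟩)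
      have := this.chromaticNumber_le
      rw [hchrom] at this
      have : k ≤ m := by exact_mod_cast this
      omega
  obtain ⟨y0, hy0⟩ := hy0
  -- k ≥ 2
  have hk2 : 2 ≤ k := by
    have h2 := hdc.2 x y0 hy0
    rw [hchrom] at h2
    have : (2 : ℕ∞) ≤ (k : ℕ) := le_trans le_add_self h2
    exact_mod_cast this
  -- coloring with rainbow property for each neighbour of x
  have colrb : ∀ y, G.Adj x y →
      ∃ c : (G.induce ({x, y}ᶜ : Set V)).Coloring (Fin (k - 2)),
        ∀ i : Fin (k - 2), ∃ v, ∃ hv : v ∈ ({x, y}ᶜ : Set V),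
          G.Adj x v ∧ G.Adj y v ∧ c ⟨v, hv⟩ = i := by
    intro y hy
    have h2 := hdc.2 x y hy
    rw [hchrom] at h2
    have hne : (G.induce ({x, y}ᶜ : Set V)).chromaticNumber ≠ ⊤ := by
      intro htop
      rw [htop] at h2
      simp [top_add] at h2
    have hm := ENat.coe_toNat hne
    set m := (G.induce ({x, y}ᶜ : Set V)).chromaticNumber.toNat with hmdef
    have hcolm : (G.induce ({x, y}ᶜ : Set V)).Colorable m :=
      chromaticNumber_le_iff_colorable.mp (le_of_eq hm.symm)
    have hmk : m + 2 ≤ k := by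
      rw [← hm] at h2
      exact_mod_cast h2
    obtain ⟨c⟩ := hcolm.mono (show m ≤ k - 2 by omega)
    have hG : ¬ G.Colorable (k - 2 + 1) := by
      intro hcol
      have := hcol.chromaticNumber_le
      rw [hchrom] at this
      have : k ≤ k - 2 + 1 := by exact_mod_cast this
      omega
    exact ⟨c, fun i => rainbow G hy c hG i⟩
  -- claim 1 : two non-adjacent neighbours
  have claim1 : ∃ u v, G.Adj x u ∧ G.Adj x v ∧ u ≠ v ∧ ¬ G.Adj u v := by
    by_contra h
    push_neg at h
    set s : Finset V := insert x (G.neighborFinset x) with hs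
    have hclique : (s : Set V).Pairwise G.Adj := by
      intro a ha b hb hne
      simp only [hs, Finset.coe_insert, Set.mem_insert_iff, Finset.mem_coe,
        mem_neighborFinset] at ha hb
      rcases ha with ha | ha
      · rcases hb with hb | hb
        · exact absurd (ha.trans hb.symm) hne
        · exact ha ▸ hb
      · rcases hb with hb | hb
        · exact hb ▸ ha.symm
        · exact h a b ha hb hne
    -- degree bound
    have hdeg : k - 1 ≤ G.degree x := by
      obtain ⟨c, hrb⟩ := colrb y0 hy0
      choose w hw hw1 hw2 hw3 using hrb
      have hwinj : Function.Injective w := by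
        intro i j hij
        have h1 := hw3 i
        rw [show (⟨w i, hw i⟩ : ({x, y0}ᶜ : Set V)) = ⟨w j, hw j⟩ from Subtype.ext hij,
          hw3 j] at h1
        exact h1.symm
      have hsub : insert y0 (Finset.image w Finset.univ) ⊆ G.neighborFinset x := by
        intro a ha
        rcases Finset.mem_insert.mp ha with ha | ha
        · exact (mem_neighborFinset G x a).mpr (ha ▸ hy0)
        · obtain ⟨i, -, hi⟩ := Finset.mem_image.mp ha
          exact (mem_neighborFinset G x a).mpr (hi ▸ hw1 i)
      have hy0ni : y0 ∉ Finset.image w Finset.univ := by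
        intro hmem
        obtain ⟨i, -, hi⟩ := Finset.mem_image.mp hmem
        exact (hw2 i).ne' (hi ▸ rfl)
      have hcard := Finset.card_le_card hsub
      rw [Finset.card_insert_of_notMem hy0ni,
        Finset.card_image_of_injective _ hwinj, Finset.card_univ, Fintype.card_fin,
        card_neighborFinset_eq_degree] at hcard
      omega
    have hscard : k ≤ s.card := by
      rw [hs, Finset.card_insert_of_notMem (notMem_neighborFinset_self G x),
        card_neighborFinset_eq_degree]
      omega
    have hall : ∀ v : V, v ∈ s := by
      intro v
      by_contra hv
      obtain ⟨m, hmk, hcol⟩ := hcritv v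
      have hts : ∀ a ∈ s, a ∈ ({v}ᶜ : Set V) := by
        intro a ha
        exact mem_singCompl (fun hav => hv (hav ▸ ha))
      have := clique_card_le G ({v}ᶜ : Set V) s hts hclique hcol
      omega
    apply hnc
    ext u v
    constructor
    · exact fun hadj => G.ne_of_adj hadj
    · exact fun hne => hclique (hall u) (hall v) hne
  obtain ⟨u, v, hu, hv, huv, hnadj⟩ := claim1
  have h2S : (2 : ℕ) ∈ S := by
    refine ⟨{u, v}, ?_, ?_, ?_⟩
    · intro a ha
      simp only [Finset.coe_insert, Set.mem_insert_iff, Finset.coe_singleton,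
        Set.mem_singleton_iff] at ha
      rcases ha with ha | ha
      · exact ha ▸ hu
      · exact ha ▸ hv
    · exact Finset.card_pair huv
    · intro a ha b hb hne
      simp only [Finset.coe_insert, Set.mem_insert_iff, Finset.coe_singleton,
        Set.mem_singleton_iff] at ha hb
      rcases ha with ha | ha <;> rcases hb with hb | hb <;> subst ha <;> subst hb
      · exact absurd rfl hne
      · exact hnadj
      · exact fun hadj => hnadj hadj.symm
      · exact absurd rfl hne
  have h2 : 2 ≤ indepNumOn G (G.neighborSet x) := le_csSup hbdd h2S
  refine ⟨h2, ?_⟩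
  have hSne : S.Nonempty := ⟨2, h2S⟩
  have hαS : indepNumOn G (G.neighborSet x) ∈ S := Nat.sSup_mem hSne hbdd
  obtain ⟨A, hAsub, hAcard, hAind⟩ := hαS
  have hAnb : A ⊆ G.neighborFinset x := by
    intro a ha
    exact (mem_neighborFinset G x a).mpr (hAsub ha)
  set B := G.neighborFinset x \ A with hB
  have hsplit : B.card + A.card = G.degree x := by
    rw [hB, Finset.card_sdiff_add_card_eq_card hAnb, card_neighborFinset_eq_degree]
  have hadjA : ∀ y ∈ A, G.Adj x y := fun y hy => hAsub hy
  suffices hkB : k - 1 ≤ B.card by omega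
  by_contra hlt
  push_neg at hlt
  -- every vertex of B is adjacent to every vertex of A
  have key : ∀ y ∈ A, ∀ b ∈ B, G.Adj y b := by
    intro y hyA
    obtain ⟨c, hrb⟩ := colrb y (hadjA y hyA)
    choose w hw hw1 hw2 hw3 using hrb
    have hwinj : Function.Injective w := by
      intro i j hij
      have h1 := hw3 i
      rw [show (⟨w i, hw i⟩ : ({x, y}ᶜ : Set V)) = ⟨w j, hw j⟩ from Subtype.ext hij,
        hw3 j] at h1
      exact h1.symm
    have hwB : ∀ i, w i ∈ B := by
      intro i
      rw [hB, Finset.mem_sdiff]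
      refine ⟨(mem_neighborFinset G x _).mpr (hw1 i), ?_⟩
      intro hmem
      exact hAind hyA hmem (hw2 i).ne (hw2 i)
    have himg : Finset.image w Finset.univ ⊆ B := by
      intro a ha
      obtain ⟨i, -, hi⟩ := Finset.mem_image.mp ha
      exact hi ▸ hwB i
    have hcardW : (Finset.image w Finset.univ).card = k - 2 := by
      rw [Finset.card_image_of_injective _ hwinj, Finset.card_univ, Fintype.card_fin]
    have hBeq : Finset.image w Finset.univ = B :=
      Finset.eq_of_subset_of_card_le himg (by omega)
    intro b hbB
    rw [← hBeq] at hbB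
    obtain ⟨i, -, hi⟩ := Finset.mem_image.mp hbB
    exact hi ▸ hw2 i
  -- pick two distinct vertices of A
  have hA2 : 1 < A.card := by omega
  obtain ⟨y, hyA, z, hzA, hyz⟩ := Finset.one_lt_card.mp hA2
  obtain ⟨c, hrb⟩ := colrb y (hadjA y hyA)
  have hzx : z ≠ x := (hadjA z hzA).ne'
  have hz : z ∈ ({x, y}ᶜ : Set V) := mem_pairCompl hzx (Ne.symm hyz)
  obtain ⟨b, hbmem, hbx, hby, hbc⟩ := hrb (c ⟨z, hz⟩)
  have hbB : b ∈ B := by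
    rw [hB, Finset.mem_sdiff]
    refine ⟨(mem_neighborFinset G x b).mpr hbx, ?_⟩
    intro hmem
    exact hAind hyA hmem hby.ne hby
  have hzb : G.Adj z b := key z hzA b hbB
  have hadj' : (G.induce ({x, y}ᶜ : Set V)).Adj ⟨z, hz⟩ ⟨b, hbmem⟩ := hzb
  exact c.valid hadj' hbc.symm
end

section
/- Let G be a non-complete double-critical k-chromatic graph. For every vertex x of G that is not adjacent to all other vertices of G, the subgraph of G induced by the neighbourhood N(x) has chromatic number at most k − 3. -/
open SimpleGraph

/-!
Take `z ≠ x` not adjacent to `x`. If some neighbour `w` of `z` lies outside `N(x) ∪ {x}`, then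
`G - z - w` is `(k-2)`-colourable and contains `x` together with `N(x)`; the neighbours of `x`
avoid the colour of `x`, so `N(x)` gets at most `k - 3` colours. Otherwise `N(z) ⊆ N(x)`, and
folding `z` onto `x` is a homomorphism `G → G - z`, so `χ(G) ≤ χ(G - z)`, contradicting
vertex-criticality.
-/

namespace SimpleGraph

variable {V : Type*} {G : SimpleGraph V}

theorem colorable_sub_of_chromaticNumber_add_le {m k : ℕ}
    (h : G.chromaticNumber + m ≤ k) : G.Colorable (k - m) := by
  obtain ⟨c, hc⟩ := ENat.ne_top_iff_exists.mp
    (ne_top_of_le_ne_top (ENat.natCast_ne_top k) (le_trans le_self_add h))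
  rw [← hc] at h
  rw [← chromaticNumber_le_iff_colorable, ← hc]
  norm_cast at h ⊢
  omega

theorem Colorable.induce_neighborSet_sub_one {s : Set V} {x : V} {n : ℕ} (hx : x ∈ s)
    (hs : G.neighborSet x ⊆ s) (h : (G.induce s).Colorable n) :
    (G.induce (G.neighborSet x)).Colorable (n - 1) := by
  classical
  let C := h.some
  let D : (G.induce (G.neighborSet x)).Coloring {c : Fin n // c ≠ C ⟨x, hx⟩} :=
    Coloring.mk (fun v => ⟨C ⟨v, hs v.2⟩, C.valid (v.2 : G.Adj x v).symm⟩)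
      fun hab heq => C.valid (by exact hab) (congrArg Subtype.val heq)
  simpa [Fintype.card_subtype_compl] using D.colorable

def foldHom [DecidableEq V] {x z : V} (hzx : z ≠ x) (hN : G.neighborSet z ⊆ G.neighborSet x) :
    G →g G.induce ({z}ᶜ : Set V) where
  toFun v := if hv : v = z then ⟨x, hzx.symm⟩ else ⟨v, hv⟩
  map_rel' {a b} hab := by
    by_cases ha : a = z <;> by_cases hb : b = z
    · exact absurd hab (by rw [ha, hb]; exact G.loopless.irrefl z)
    · rw [dif_pos ha, dif_neg hb]; exact hN (ha ▸ hab)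
    · rw [dif_neg ha, dif_pos hb]; exact (hN (hb ▸ hab.symm)).symm
    · rw [dif_neg ha, dif_neg hb]; exact hab

theorem chromaticNumber_le_induce_compl_of_neighborSet_subset {x z : V} (hzx : z ≠ x)
    (hN : G.neighborSet z ⊆ G.neighborSet x) :
    G.chromaticNumber ≤ (G.induce ({z}ᶜ : Set V)).chromaticNumber := by
  classical
  exact chromaticNumber_mono_of_hom (foldHom hzx hN)

end SimpleGraph

theorem stmt9_general {V : Type} (G : SimpleGraph V) (k : ℕ)
    (hdc : DoubleCritical G) (hchrom : G.chromaticNumber = k)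
    (x : V) (hx : ∃ z : V, z ≠ x ∧ ¬ G.Adj x z) :
    (G.induce (G.neighborSet x)).chromaticNumber ≤ (k - 3 : ℕ) := by
  obtain ⟨z, hzx, hxz⟩ := hx
  by_cases hw : ∃ w, G.Adj z w ∧ w ≠ x ∧ ¬ G.Adj x w
  · obtain ⟨w, hzw, hwx, hxw⟩ := hw
    have hcol : (G.induce ({z, w}ᶜ : Set V)).Colorable (k - 2) :=
      colorable_sub_of_chromaticNumber_add_le (hchrom ▸ hdc.2 z w hzw)
    have hN : G.neighborSet x ⊆ ({z, w}ᶜ : Set V) := by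
      rintro v hv (rfl | rfl)
      exacts [hxz hv, hxw hv]
    have hx : x ∈ ({z, w}ᶜ : Set V) := by
      rintro (h | h)
      exacts [hzx h.symm, hwx h.symm]
    rw [chromaticNumber_le_iff_colorable, show k - 3 = k - 2 - 1 by omega]
    exact hcol.induce_neighborSet_sub_one hx hN
  · have hN : G.neighborSet z ⊆ G.neighborSet x := fun w hzw => by
      by_contra hxw
      exact hw ⟨w, hzw, by rintro rfl; exact hxz hzw.symm, hxw⟩
    exact absurd (chromaticNumber_le_induce_compl_of_neighborSet_subset hzx hN)
      (hdc.1 z).not_ge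

/-- For every vertex `x` of a non-complete double-critical `k`-chromatic graph `G` that is
not adjacent to all other vertices, the subgraph induced by the neighbourhood `N(x)` has
chromatic number at most `k - 3`. -/
theorem stmt9 {V : Type} [Fintype V] (G : SimpleGraph V) (k : ℕ)
    (hnc : G ≠ ⊤) (hdc : DoubleCritical G) (hchrom : G.chromaticNumber = k)
    (x : V) (hx : ∃ z : V, z ≠ x ∧ ¬ G.Adj x z) :
    (G.induce (G.neighborSet x)).chromaticNumber ≤ (k - 3 : ℕ) :=
  stmt9_general G k hdc hchrom x hx
end

section
/- Let G be a non-complete double-critical k-chromatic graph and let x be a vertex of degree k+1. Let H̄ be the complement of the subgraph of G induced by N(x). Then every vertex of H̄ has degree 0 or 2 in H̄, at least one vertex of H̄ has degree 2, and H̄ contains no cycle of length 3 or 4; equivalently, H̄ is a disjoint union of isolated vertices (possibly none) and cycles (at least one), each cycle having length at least five. -/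
open SimpleGraph

lemma key_lemma {V : Type} [Fintype V] (G : SimpleGraph V) (k : ℕ) (hk : 2 ≤ k)
    (hchrom : G.chromaticNumber = k) (u v : V) (huv : G.Adj u v)
    (c : (G.induce ({u, v}ᶜ : Set V)).Coloring (Fin (k - 2))) (i : Fin (k - 2)) :
    ∃ w : V, G.Adj u w ∧ G.Adj v w ∧ ∃ hw : w ∈ ({u, v}ᶜ : Set V), c ⟨w, hw⟩ = i := by
  classical
  by_contra hcon
  push_neg at hcon
  have hmem : ∀ w : V, w ≠ u → w ≠ v → w ∈ ({u, v}ᶜ : Set V) := by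
    intro w h1 h2; simp [h1, h2]
  set c' : V → Fin (k - 2) := fun w =>
    if h : w ∈ ({u, v}ᶜ : Set V) then c ⟨w, h⟩ else i with hc'def
  have hc' : ∀ (w : V) (h : w ∈ ({u, v}ᶜ : Set V)), c' w = c ⟨w, h⟩ := by
    intro w h; rw [hc'def]; exact dif_pos h
  have valid' : ∀ a b : V, a ∈ ({u, v}ᶜ : Set V) → b ∈ ({u, v}ᶜ : Set V) →
      G.Adj a b → c' a ≠ c' b := by
    intro a b ha hb hab
    rw [hc' a ha, hc' b hb]
    exact c.valid (by simp [hab])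
  have hcon' : ∀ w : V, G.Adj u w → G.Adj v w → c' w ≠ i := by
    intro w h1 h2
    have hw : w ∈ ({u, v}ᶜ : Set V) := hmem w h1.ne' h2.ne'
    rw [hc' w hw]
    exact hcon w h1 h2 hw
  set m : Fin (k - 2 + 1) := Fin.last _ with hm
  set f : V → Fin (k - 2 + 1) := fun w =>
    if w = u then i.castSucc
    else if w = v then m
    else if c' w = i ∧ G.Adj u w then m
    else (c' w).castSucc with hf
  have cast_ne_m : ∀ j : Fin (k - 2), j.castSucc ≠ m := fun j => (Fin.castSucc_lt_last j).ne
  have fu : f u = i.castSucc := by simp [hf]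
  have fv : f v = m := by simp [hf, huv.ne']
  have fother : ∀ w : V, w ≠ u → w ≠ v →
      f w = if c' w = i ∧ G.Adj u w then m else (c' w).castSucc := by
    intro w h1 h2; simp [hf, h1, h2]
  have hvalid : ∀ p q : V, G.Adj p q → f p ≠ f q := by
    have main : ∀ p q : V, G.Adj p q → p ≠ u → p ≠ v → q ≠ u → q ≠ v → f p ≠ f q := by
      intro p q hpq hp1 hp2 hq1 hq2 heq
      rw [fother p hp1 hp2, fother q hq1 hq2] at heq
      have hval := valid' p q (hmem p hp1 hp2) (hmem q hq1 hq2) hpq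
      split_ifs at heq with h1 h2 h2
      · exact hval (h1.1.trans h2.1.symm)
      · exact cast_ne_m _ heq.symm
      · exact cast_ne_m _ heq
      · exact hval (Fin.castSucc_injective _ heq)
    have hu : ∀ q : V, G.Adj u q → q ≠ v → f u ≠ f q := by
      intro q hq hq2 heq
      rw [fu, fother q hq.ne' hq2] at heq
      split_ifs at heq with h1
      · exact cast_ne_m _ heq
      · exact h1 ⟨(Fin.castSucc_injective _ heq).symm, hq⟩
    have hv : ∀ q : V, G.Adj v q → q ≠ u → f v ≠ f q := by
      intro q hq hq1 heq
      rw [fv, fother q hq1 hq.ne'] at heq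
      split_ifs at heq with h1
      · exact hcon' q h1.2 hq h1.1
      · exact cast_ne_m _ heq.symm
    intro p q hpq
    by_cases hp1 : p = u
    · subst hp1
      by_cases hq2 : q = v
      · subst hq2; rw [fu, fv]; exact cast_ne_m i
      · exact hu q hpq hq2
    · by_cases hp2 : p = v
      · subst hp2
        by_cases hq1 : q = u
        · subst hq1; rw [fu, fv]; exact fun h => cast_ne_m i h.symm
        · exact hv q hpq hq1
      · by_cases hq1 : q = u
        · subst hq1; exact fun h => hu p hpq.symm hp2 h.symm
        · by_cases hq2 : q = v
          · subst hq2; exact fun h => hv p hpq.symm hp1 h.symm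
          · exact main p q hpq hp1 hp2 hq1 hq2
  have hcol : G.Colorable (k - 2 + 1) := ⟨Coloring.mk f (fun {p q} h => hvalid p q h)⟩
  have h1 : G.chromaticNumber ≤ (k - 2 + 1 : ℕ) := hcol.chromaticNumber_le
  rw [hchrom, Nat.cast_le] at h1
  omega

lemma colorable_sub_two {V : Type} [Fintype V] (G : SimpleGraph V) (k : ℕ)
    (h : G.chromaticNumber + 2 ≤ (k : ℕ∞)) : G.Colorable (k - 2) := by
  have hne : G.chromaticNumber ≠ ⊤ := by
    intro ht; rw [ht] at h; simp at h
  obtain ⟨n, hn⟩ := (WithTop.ne_top_iff_exists).1 hne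
  have hcol : G.Colorable n := by
    rw [← chromaticNumber_le_iff_colorable, ← hn]
    exact le_rfl
  have hle : n + 2 ≤ k := by
    rw [← Nat.cast_le (α := ℕ∞)]
    push_cast
    rw [← hn] at h
    exact h
  exact hcol.mono (by omega)

lemma walk3_decomp {α : Type} {H : SimpleGraph α} {v : α} (p : H.Walk v v) (h : p.length = 3) :
    ∃ a b : α, H.Adj v a ∧ H.Adj a b ∧ H.Adj b v := by
  cases p with
  | nil => simp at h
  | cons h1 q =>
    cases q with
    | nil => simp at h
    | cons h2 r =>
      cases r with
      | nil => simp at h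
      | cons h3 s =>
        cases s with
        | nil => exact ⟨_, _, h1, h2, h3⟩
        | cons h4 t => simp [SimpleGraph.Walk.length_cons] at h

lemma walk4_decomp {α : Type} {H : SimpleGraph α} {v : α} (p : H.Walk v v) (h : p.length = 4) :
    ∃ a b d : α, H.Adj v a ∧ H.Adj a b ∧ H.Adj b d ∧ H.Adj d v ∧
      p.support = [v, a, b, d, v] := by
  cases p with
  | nil => simp at h
  | cons h1 q =>
    cases q with
    | nil => simp at h
    | cons h2 r =>
      cases r with
      | nil => simp at h
      | cons h3 s =>
        cases s with
        | nil => simp at h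
        | cons h4 t =>
          cases t with
          | nil => exact ⟨_, _, _, h1, h2, h3, h4, by simp⟩
          | cons h5 z => simp [SimpleGraph.Walk.length_cons] at h

/-- Let `x` be a vertex of degree `k + 1` in a non-complete double-critical `k`-chromatic
graph `G`, and let `H̄` be the complement of the subgraph induced by `N(x)`. Then every
vertex of `H̄` has degree `0` or `2`, at least one vertex has degree `2`, and `H̄` has no
cycle of length `3` or `4`; i.e. `H̄` is a disjoint union of isolated vertices (possibly
none) and cycles (at least one), each of length at least five. -/
theorem stmt10 {V : Type} [Fintype V] (G : SimpleGraph V) [DecidableRel G.Adj] (k : ℕ)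
    (hnc : G ≠ ⊤) (hdc : DoubleCritical G) (hchrom : G.chromaticNumber = k)
    (x : V) (hdeg : G.degree x = k + 1) :
    (∀ v : (G.neighborSet x : Set V),
      ((G.induce (G.neighborSet x))ᶜ.neighborSet v).ncard = 0 ∨
      ((G.induce (G.neighborSet x))ᶜ.neighborSet v).ncard = 2) ∧
    (∃ v : (G.neighborSet x : Set V),
      ((G.induce (G.neighborSet x))ᶜ.neighborSet v).ncard = 2) ∧
    (¬ ∃ (v : (G.neighborSet x : Set V))
        (w : ((G.induce (G.neighborSet x))ᶜ).Walk v v),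
        w.IsCycle ∧ (w.length = 3 ∨ w.length = 4)) := by
  classical
  obtain ⟨hvc, hdc2⟩ := hdc
  have hk2 : 2 ≤ k := by
    by_contra hlt
    have hxn : ∃ y, G.Adj x y := (G.degree_pos_iff_exists_adj x).1 (by omega)
    obtain ⟨y, hy⟩ := hxn
    have hcol : G.Colorable 1 := by
      rw [← chromaticNumber_le_iff_colorable, hchrom]
      exact_mod_cast (by omega : k ≤ 1)
    obtain ⟨co⟩ := hcol
    exact co.valid hy (Subsingleton.elim _ _)
  have hAcard : (G.neighborSet x).ncard = k + 1 := by
    rw [← hdeg, Set.ncard_eq_toFinset_card', SimpleGraph.degree, neighborFinset_def]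
  have hAuniv : (Set.univ : Set ↥(G.neighborSet x)).ncard = k + 1 := by
    rw [Set.ncard_univ, Nat.card_coe_set_eq, hAcard]
  have hHadj : ∀ v w : ↥(G.neighborSet x),
      ((G.induce (G.neighborSet x))ᶜ).Adj v w ↔ v ≠ w ∧ ¬ G.Adj ↑v ↑w := by
    intro v w
    rw [compl_adj]
    simp [Subtype.ext_iff, Ne]
  have hxadj : ∀ v : ↥(G.neighborSet x), G.Adj x ↑v := fun v => v.2
  have hvnex : ∀ v : ↥(G.neighborSet x), (v : V) ≠ x := fun v => (hxadj v).ne'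
  have getcolor : ∀ a : ↥(G.neighborSet x),
      (G.induce ({x, ↑a}ᶜ : Set V)).Colorable (k - 2) := fun a =>
    colorable_sub_two _ k (by rw [← hchrom]; exact hdc2 x ↑a (hxadj a))
  have cmem : ∀ (a : ↥(G.neighborSet x)) (w : ↥(G.neighborSet x)), (w : V) ≠ ↑a →
      (w : V) ∈ ({x, ↑a}ᶜ : Set V) := by
    intro a w hne
    simp [hvnex w, hne]
  -- degree at most 2
  have hdegle : ∀ v : ↥(G.neighborSet x),
      (((G.induce (G.neighborSet x))ᶜ).neighborSet v).ncard ≤ 2 := by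
    intro v
    obtain ⟨c⟩ := getcolor v
    have hkey := fun i => key_lemma G k hk2 hchrom x ↑v (hxadj v) c i
    choose W hW1 hW2 hW3 hW4 using hkey
    set W' : Fin (k - 2) → ↥(G.neighborSet x) := fun i => ⟨W i, hW1 i⟩ with hW'
    have hWinj : Function.Injective W' := by
      intro i j hij
      have hweq : W i = W j := congrArg Subtype.val hij
      have heq2 : (⟨W i, hW3 i⟩ : ↥({x, (↑v : V)}ᶜ : Set V)) = ⟨W j, hW3 j⟩ :=
        Subtype.ext hweq
      rw [← hW4 i, ← hW4 j, heq2]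
    have hdisj : Disjoint (((G.induce (G.neighborSet x))ᶜ).neighborSet v)
        (Set.range W' ∪ {v}) := by
      rw [Set.disjoint_left]
      intro s hs hs2
      have hadj : ((G.induce (G.neighborSet x))ᶜ).Adj v s := hs
      rcases hs2 with ⟨i, hi⟩ | hsv
      · have : G.Adj ↑v ↑s := by
          rw [← show W i = (s : V) from congrArg Subtype.val hi]; exact hW2 i
        exact ((hHadj v s).1 hadj).2 this
      · have hsv' : s = v := by simpa using hsv
        rw [hsv'] at hadj
        exact ((G.induce (G.neighborSet x))ᶜ).irrefl hadj
    have hvnot : v ∉ Set.range W' := by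
      rintro ⟨i, hi⟩
      have hadj : G.Adj ↑v (W i) := hW2 i
      rw [show W i = (v : V) from congrArg Subtype.val hi] at hadj
      exact G.irrefl hadj
    have h1 : ((((G.induce (G.neighborSet x))ᶜ).neighborSet v) ∪
        (Set.range W' ∪ {v})).ncard ≤ k + 1 := by
      rw [← hAuniv]
      exact Set.ncard_le_ncard (Set.subset_univ _) Set.finite_univ
    rw [Set.ncard_union_eq hdisj (Set.toFinite _) (Set.toFinite _)] at h1
    have h2 : (Set.range W' ∪ {v}).ncard = (k - 2) + 1 := by
      rw [Set.union_singleton, Set.ncard_insert_of_notMem hvnot (Set.toFinite _),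
        ← Set.image_univ, Set.ncard_image_of_injective _ hWinj, Set.ncard_univ,
        Nat.card_eq_fintype_card, Fintype.card_fin]
    omega
  -- degree never 1
  have hdeg1 : ∀ v : ↥(G.neighborSet x),
      (((G.induce (G.neighborSet x))ᶜ).neighborSet v).ncard ≠ 1 := by
    intro v h1
    obtain ⟨z, hz⟩ := Set.ncard_eq_one.1 h1
    have hvz : ((G.induce (G.neighborSet x))ᶜ).Adj v z := by
      have hmem : z ∈ ((G.induce (G.neighborSet x))ᶜ).neighborSet v := by
        rw [hz]; exact rfl
      exact hmem
    have hGvz : ¬ G.Adj ↑v ↑z := ((hHadj v z).1 hvz).2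
    have hvnez : v ≠ z := ((hHadj v z).1 hvz).1
    have hadjall : ∀ s : ↥(G.neighborSet x), s ≠ v → s ≠ z → G.Adj ↑v ↑s := by
      intro s hsv hsz
      by_contra hna
      have hadj : ((G.induce (G.neighborSet x))ᶜ).Adj v s :=
        (hHadj v s).2 ⟨fun h => hsv h.symm, hna⟩
      have hmem : s ∈ (((G.induce (G.neighborSet x))ᶜ).neighborSet v) := hadj
      rw [hz] at hmem
      exact hsz hmem
    obtain ⟨c⟩ := getcolor z
    have hvmem : (↑v : V) ∈ ({x, (↑z : V)}ᶜ : Set V) :=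
      cmem z v (fun h => hvnez (Subtype.ext h))
    obtain ⟨w, hw1, hw2, hw3, hw4⟩ :=
      key_lemma G k hk2 hchrom x ↑z (hxadj z) c (c ⟨↑v, hvmem⟩)
    have hwnv : (⟨w, hw1⟩ : ↥(G.neighborSet x)) ≠ v := by
      intro h
      have : G.Adj (↑z : V) ↑v := by
        rw [← show (w : V) = ↑v from congrArg Subtype.val h]; exact hw2
      exact hGvz this.symm
    have hwnz : (⟨w, hw1⟩ : ↥(G.neighborSet x)) ≠ z :=
      fun h => hw2.ne' (congrArg Subtype.val h)
    have hadj : G.Adj ↑v w := hadjall ⟨w, hw1⟩ hwnv hwnz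
    have hindadj : (G.induce ({x, (↑z : V)}ᶜ : Set V)).Adj ⟨↑v, hvmem⟩ ⟨w, hw3⟩ := by
      simp [hadj]
    exact c.valid hindadj hw4.symm
  refine ⟨fun v => by have h1 := hdegle v; have h2 := hdeg1 v; omega, ?_, ?_⟩
  · -- at least one vertex of degree 2
    by_contra h2
    push_neg at h2
    have hall0 : ∀ v : ↥(G.neighborSet x),
        (((G.induce (G.neighborSet x))ᶜ).neighborSet v).ncard = 0 := by
      intro v
      have ha := hdegle v; have hb := hdeg1 v; have hc := h2 v; omega
    have hcolk : G.Colorable k := by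
      rw [← chromaticNumber_le_iff_colorable, hchrom]
    have hcf : G.CliqueFree (k + 1) := hcolk.cliqueFree (by omega)
    apply hcf (G.neighborFinset x)
    constructor
    · intro a ha b hb hab
      rw [Finset.mem_coe, mem_neighborFinset] at ha hb
      by_contra hna
      have hHab : ((G.induce (G.neighborSet x))ᶜ).Adj ⟨a, ha⟩ ⟨b, hb⟩ :=
        (hHadj _ _).2 ⟨fun h => hab (congrArg Subtype.val h), hna⟩
      have hmem : (⟨b, hb⟩ : ↥(G.neighborSet x)) ∈
          (((G.induce (G.neighborSet x))ᶜ).neighborSet ⟨a, ha⟩) := hHab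
      rw [(Set.ncard_eq_zero (Set.toFinite _)).1 (hall0 ⟨a, ha⟩)] at hmem
      exact hmem
    · exact hdeg
  · -- no cycles of length 3 or 4
    rintro ⟨v, p, hcyc, hlen | hlen⟩
    · -- triangle
      obtain ⟨a, b, h1, h2, h3⟩ := walk3_decomp p hlen
      have hane : a ≠ b := h2.ne
      have hNv : ((G.induce (G.neighborSet x))ᶜ).neighborSet v = {a, b} := by
        refine (Set.eq_of_subset_of_ncard_le ?_ ?_ (Set.toFinite _)).symm
        · intro s hs
          have h : s = a ∨ s = b := by simpa using hs
          rcases h with h | h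
          · subst h; exact h1
          · subst h; exact h3.symm
        · rw [Set.ncard_pair hane]; exact hdegle v
      have hadjall : ∀ s : ↥(G.neighborSet x), s ≠ v → s ≠ a → s ≠ b → G.Adj ↑v ↑s := by
        intro s hsv hsa hsb
        by_contra hna
        have hmem : s ∈ ((G.induce (G.neighborSet x))ᶜ).neighborSet v :=
          (hHadj v s).2 ⟨fun h => hsv h.symm, hna⟩
        rw [hNv] at hmem
        have h : s = a ∨ s = b := by simpa using hmem
        rcases h with h | h
        · exact hsa h
        · exact hsb h
      obtain ⟨c⟩ := getcolor a
      have hGva : ¬ G.Adj ↑v ↑a := ((hHadj v a).1 h1).2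
      have hGab : ¬ G.Adj ↑a ↑b := ((hHadj a b).1 h2).2
      have hvmem : (↑v : V) ∈ ({x, (↑a : V)}ᶜ : Set V) :=
        cmem a v (fun h => ((hHadj v a).1 h1).1 (Subtype.ext h))
      obtain ⟨w, hw1, hw2, hw3, hw4⟩ :=
        key_lemma G k hk2 hchrom x ↑a (hxadj a) c (c ⟨↑v, hvmem⟩)
      have hwna : (⟨w, hw1⟩ : ↥(G.neighborSet x)) ≠ a :=
        fun h => hw2.ne' (congrArg Subtype.val h)
      have hwnv : (⟨w, hw1⟩ : ↥(G.neighborSet x)) ≠ v := by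
        intro h
        exact hGva ((show G.Adj (↑a : V) ↑v by
          rw [← show (w : V) = ↑v from congrArg Subtype.val h]; exact hw2).symm)
      have hwnb : (⟨w, hw1⟩ : ↥(G.neighborSet x)) ≠ b := by
        intro h
        exact hGab (by rw [← show (w : V) = ↑b from congrArg Subtype.val h]; exact hw2)
      have hadj : G.Adj ↑v w := hadjall ⟨w, hw1⟩ hwnv hwna hwnb
      have hindadj : (G.induce ({x, (↑a : V)}ᶜ : Set V)).Adj ⟨↑v, hvmem⟩ ⟨w, hw3⟩ := by
        simp [hadj]
      exact c.valid hindadj hw4.symm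
    · -- 4-cycle
      obtain ⟨a, b, d, h1, h2, h3, h4, hsup⟩ := walk4_decomp p hlen
      have hnd := hcyc.support_nodup
      rw [hsup] at hnd
      simp at hnd
      have hab : a ≠ b := h2.ne
      have had : a ≠ d := by tauto
      have hbd : b ≠ d := h3.ne
      have hbv : b ≠ v := by tauto
      have hNv : ((G.induce (G.neighborSet x))ᶜ).neighborSet v = {a, d} := by
        refine (Set.eq_of_subset_of_ncard_le ?_ ?_ (Set.toFinite _)).symm
        · intro s hs
          have h : s = a ∨ s = d := by simpa using hs
          rcases h with h | h
          · subst h; exact h1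
          · subst h; exact h4.symm
        · rw [Set.ncard_pair had]; exact hdegle v
      have hNb : ((G.induce (G.neighborSet x))ᶜ).neighborSet b = {a, d} := by
        refine (Set.eq_of_subset_of_ncard_le ?_ ?_ (Set.toFinite _)).symm
        · intro s hs
          have h : s = a ∨ s = d := by simpa using hs
          rcases h with h | h
          · subst h; exact h2.symm
          · subst h; exact h3
        · rw [Set.ncard_pair had]; exact hdegle b
      have hGvb : G.Adj ↑v ↑b := by
        by_contra hna
        have hmem : b ∈ ((G.induce (G.neighborSet x))ᶜ).neighborSet v :=
          (hHadj v b).2 ⟨fun h => hbv h.symm, hna⟩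
        rw [hNv] at hmem
        have h : b = a ∨ b = d := by simpa using hmem
        rcases h with h | h
        · exact hab h.symm
        · exact hbd h
      obtain ⟨c⟩ := getcolor a
      have hdmem : (↑d : V) ∈ ({x, (↑a : V)}ᶜ : Set V) :=
        cmem a d (fun h => had (Subtype.ext h.symm))
      -- generic step: for p ∈ {v, b}, the color of p equals the color of d
      have step : ∀ (q : ↥(G.neighborSet x)) (hq : (↑q : V) ∈ ({x, (↑a : V)}ᶜ : Set V)),
          (∀ s : ↥(G.neighborSet x), s ≠ q → s ≠ a → s ≠ d → G.Adj ↑q ↑s) →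
          ¬ G.Adj ↑a ↑q → c ⟨↑d, hdmem⟩ = c ⟨↑q, hq⟩ := by
        intro q hq hadjall hnaq
        obtain ⟨w, hw1, hw2, hw3, hw4⟩ :=
          key_lemma G k hk2 hchrom x ↑a (hxadj a) c (c ⟨↑q, hq⟩)
        have hwna : (⟨w, hw1⟩ : ↥(G.neighborSet x)) ≠ a :=
          fun h => hw2.ne' (congrArg Subtype.val h)
        have hwnq : (⟨w, hw1⟩ : ↥(G.neighborSet x)) ≠ q := by
          intro h
          exact hnaq (by rw [← show (w : V) = ↑q from congrArg Subtype.val h]; exact hw2)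
        by_cases hwd : (⟨w, hw1⟩ : ↥(G.neighborSet x)) = d
        · have hweq : (⟨w, hw3⟩ : ↥({x, (↑a : V)}ᶜ : Set V)) = ⟨↑d, hdmem⟩ :=
            Subtype.ext (show (w : V) = ↑d from congrArg Subtype.val hwd)
          rw [← hw4, hweq]
        · have hadj : G.Adj ↑q w := hadjall ⟨w, hw1⟩ hwnq hwna hwd
          have hindadj : (G.induce ({x, (↑a : V)}ᶜ : Set V)).Adj ⟨↑q, hq⟩ ⟨w, hw3⟩ := by
            simp [hadj]
          exact absurd hw4.symm (c.valid hindadj)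
      have hvmem : (↑v : V) ∈ ({x, (↑a : V)}ᶜ : Set V) :=
        cmem a v (fun h => ((hHadj v a).1 h1).1 (Subtype.ext h))
      have hbmem : (↑b : V) ∈ ({x, (↑a : V)}ᶜ : Set V) :=
        cmem a b (fun h => hab (Subtype.ext h.symm))
      have hadjallv : ∀ s : ↥(G.neighborSet x), s ≠ v → s ≠ a → s ≠ d → G.Adj ↑v ↑s := by
        intro s hsv hsa hsd
        by_contra hna
        have hmem : s ∈ ((G.induce (G.neighborSet x))ᶜ).neighborSet v :=
          (hHadj v s).2 ⟨fun h => hsv h.symm, hna⟩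
        rw [hNv] at hmem
        have h : s = a ∨ s = d := by simpa using hmem
        rcases h with h | h
        · exact hsa h
        · exact hsd h
      have hadjallb : ∀ s : ↥(G.neighborSet x), s ≠ b → s ≠ a → s ≠ d → G.Adj ↑b ↑s := by
        intro s hsb hsa hsd
        by_contra hna
        have hmem : s ∈ ((G.induce (G.neighborSet x))ᶜ).neighborSet b :=
          (hHadj b s).2 ⟨fun h => hsb h.symm, hna⟩
        rw [hNb] at hmem
        have h : s = a ∨ s = d := by simpa using hmem
        rcases h with h | h
        · exact hsa h
        · exact hsd h
      have hGva : ¬ G.Adj ↑a ↑v := fun h => ((hHadj v a).1 h1).2 h.symm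
      have hGab : ¬ G.Adj ↑a ↑b := ((hHadj a b).1 h2).2
      have hcv := step v hvmem hadjallv hGva
      have hcb := step b hbmem hadjallb hGab
      have hceq : c ⟨↑v, hvmem⟩ = c ⟨↑b, hbmem⟩ := hcv ▸ hcb
      have hindadj : (G.induce ({x, (↑a : V)}ᶜ : Set V)).Adj ⟨↑v, hvmem⟩ ⟨↑b, hbmem⟩ := by
        simp [hGvb]
      exact c.valid hindadj hceq
end

section
/- If G is a non-complete double-critical k-chromatic graph, then no two vertices of degree k+1 are adjacent in G. -/
open SimpleGraph

open Finset

/-!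
Let `x` have degree `k + 1` and let `H_x` (`nbhdCompl`) be the complement of `G[N(x)]`. For an
edge `xt`, a `(k - 2)`-colouring of `G - x - t` uses every colour on a common neighbour of `x`
and `t`, or it would extend to a `(k - 1)`-colouring of `G`. Since `N(x) - t` has only `k`
vertices, `t` has degree at most two in `H_x`; the same colourings show that no vertex has degree
one in `H_x` and that `H_x` has no triangle. Colouring `G - u - v` for an edge `uv` of `G[N(x)]` shows that `H_x - u - v` has two
disjoint edges, so no path on four vertices, pentagon or hexagon of `H_x` covers its edges.

If a neighbour `y` of `x` has degree `k + 1` too, colour `G - x - y` with `k - 2` colours.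
Exactly two colours repeat on `N(x) - y`, on edges `pq` and `rs` of `H_x`. An edge `ab` of `H_x`
avoiding `y, p, q, r, s` is impossible: `a` and `b` would be the only vertices of their colours
in `N(x) - y` and `N(y) - x` respectively, and giving `x` the colour of `a`, `y` that of `b`,
and `a`, `b` a new colour would `(k - 1)`-colour `G`. So `{y, p, q, r, s}` covers `H_x`, which
forces one of the excluded configurations.
-/

namespace Finset

variable {α β : Type*} [DecidableEq β]

def repeatedValues (s : Finset α) (f : α → β) : Finset β :=
  {b ∈ s.image f | 1 < #{a ∈ s | f a = b}}

theorem mem_repeatedValues {s : Finset α} {f : α → β} {b : β} :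
    b ∈ s.repeatedValues f ↔ ∃ a ∈ s, ∃ a' ∈ s, a ≠ a' ∧ f a = b ∧ f a' = b := by
  simp only [repeatedValues, mem_filter, mem_image, one_lt_card]
  constructor
  · rintro ⟨-, a, ⟨ha, rfl⟩, a', ⟨ha', hfa'⟩, hne⟩
    exact ⟨a, ha, a', ha', hne, rfl, hfa'⟩
  · rintro ⟨a, ha, a', ha', hne, rfl, hfa'⟩
    exact ⟨⟨a, ha, rfl⟩, a, ⟨ha, rfl⟩, a', ⟨ha', hfa'⟩, hne⟩

theorem card_eq_card_image_add_card_repeatedValues {s : Finset α} {f : α → β}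
    (h : ∀ b, #{a ∈ s | f a = b} ≤ 2) : #s = #(s.image f) + #(s.repeatedValues f) := by
  rw [card_eq_sum_card_image f s, repeatedValues, card_filter, card_eq_sum_ones (s.image f),
    ← sum_add_distrib]
  refine sum_congr rfl fun b hb => ?_
  obtain ⟨a, ha, rfl⟩ := mem_image.1 hb
  have : 0 < #{a' ∈ s | f a' = f a} := card_pos.2 ⟨a, mem_filter.2 ⟨ha, rfl⟩⟩
  have := h (f a)
  split_ifs <;> omega

end Finset

namespace SimpleGraph

variable {V : Type} {G : SimpleGraph V}

theorem not_colorable_of_chromaticNumber_eq {k n : ℕ} (hχ : G.chromaticNumber = k) (hn : n < k) :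
    ¬G.Colorable n := fun h => by
  have := h.chromaticNumber_le
  rw [hχ] at this
  exact absurd (by exact_mod_cast this) (not_le.2 hn)

theorem colorable_of_forall_lt {n : ℕ} (c : V → ℕ) (hlt : ∀ v, c v < n)
    (hne : ∀ u v, G.Adj u v → c u ≠ c v) : G.Colorable n :=
  ⟨Coloring.mk (fun v => ⟨c v, hlt v⟩) fun h hc => hne _ _ h (congrArg Fin.val hc)⟩

/-- A proper colouring of `G - x - y` with the colours `0, …, m - 1`, given as a function on all
of `V` whose values at `x` and `y` are ignored. -/
structure IsColoringOff (G : SimpleGraph V) (x y : V) (m : ℕ) (c : V → ℕ) : Prop where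
  lt : ∀ w, w ≠ x → w ≠ y → c w < m
  ne : ∀ a b, a ≠ x → a ≠ y → b ≠ x → b ≠ y → G.Adj a b → c a ≠ c b

def nbhdCompl (G : SimpleGraph V) (x : V) : SimpleGraph V where
  Adj a b := G.Adj x a ∧ G.Adj x b ∧ a ≠ b ∧ ¬G.Adj a b
  symm.symm _ _ h := ⟨h.2.1, h.1, h.2.2.1.symm, fun h' => h.2.2.2 h'.symm⟩
  loopless.irrefl _ h := h.2.2.1 rfl

theorem adj_of_not_nbhdCompl_adj {x a b : V} (ha : G.Adj x a) (hb : G.Adj x b) (hab : a ≠ b)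
    (h : ¬(G.nbhdCompl x).Adj a b) : G.Adj a b := by
  by_contra h'
  exact h ⟨ha, hb, hab, h'⟩

namespace IsColoringOff

variable {x y : V} {m : ℕ} {c : V → ℕ}

theorem nbhdCompl_adj_of_eq (hc : G.IsColoringOff x y m c) {a b : V} (ha : G.Adj x a)
    (hb : G.Adj x b) (hay : a ≠ y) (hby : b ≠ y) (hab : a ≠ b) (h : c a = c b) :
    (G.nbhdCompl x).Adj a b :=
  ⟨ha, hb, hab, fun h' => hc.ne a b (G.ne_of_adj ha).symm hay (G.ne_of_adj hb).symm hby h' h⟩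

theorem colorable_succ_of_forall_commonNeighbor_ne (hxy : G.Adj x y)
    (hc : G.IsColoringOff x y m c) {i : ℕ} (hi : i < m)
    (hcommon : ∀ w, G.Adj x w → G.Adj y w → c w ≠ i) :
    G.Colorable (m + 1) := by
  classical
  have := hc.lt; have := hc.ne; have := G.ne_of_adj hxy
  refine colorable_of_forall_lt
    (fun v => if v = x then i else if v = y then m else if G.Adj x v ∧ c v = i then m else c v)
    (fun v => by grind) (fun u v huv => ?_)
  have := G.ne_of_adj huv; have := huv.symm
  split_ifs <;> subst_vars <;> grind

theorem colorable_succ_of_forall_not_adj (hxy : G.Adj x y) (hc : G.IsColoringOff x y m c)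
    {i j : ℕ} (hi : i < m) (hj : j < m) (hij : i ≠ j)
    (hno : ∀ u v, G.Adj x u → u ≠ y → c u = i → G.Adj y v → v ≠ x → c v = j → ¬G.Adj u v) :
    G.Colorable (m + 1) := by
  classical
  have := hc.lt; have := hc.ne; have := G.ne_of_adj hxy
  refine colorable_of_forall_lt
    (fun v => if v = x then i else if v = y then j else
      if (G.Adj x v ∧ c v = i) ∨ (G.Adj y v ∧ c v = j) then m else c v)
    (fun v => by grind) (fun u v huv => ?_)
  have := G.ne_of_adj huv; have := huv.symm
  split_ifs <;> subst_vars <;> grind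

variable {k : ℕ}

theorem exists_commonNeighbor_eq (hχ : G.chromaticNumber = k) (hxy : G.Adj x y)
    (hc : G.IsColoringOff x y (k - 2) c) {i : ℕ} (hi : i < k - 2) :
    ∃ w, G.Adj x w ∧ G.Adj y w ∧ c w = i := by
  by_contra! h
  exact not_colorable_of_chromaticNumber_eq hχ (by omega)
    (hc.colorable_succ_of_forall_commonNeighbor_ne hxy hi h)

theorem adj_of_unique (hχ : G.chromaticNumber = k) (hxy : G.Adj x y)
    (hc : G.IsColoringOff x y (k - 2) c) {a b : V} (ha : G.Adj x a) (hay : a ≠ y)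
    (hb : G.Adj y b) (hbx : b ≠ x) (hab : c a ≠ c b)
    (hua : ∀ u, G.Adj x u → u ≠ y → c u = c a → u = a)
    (hub : ∀ v, G.Adj y v → v ≠ x → c v = c b → v = b) : G.Adj a b := by
  by_contra h
  refine not_colorable_of_chromaticNumber_eq hχ ?_ (hc.colorable_succ_of_forall_not_adj hxy
    (hc.lt a (G.ne_of_adj ha).symm hay) (hc.lt b hbx (G.ne_of_adj hb).symm) hab ?_)
  · have := hc.lt a (G.ne_of_adj ha).symm hay
    omega
  · intro u v hu huy hcu hv hvx hcv
    rwa [hua u hu huy hcu, hub v hv hvx hcv]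

theorem exists_nbhdCompl_adj (hχ : G.chromaticNumber = k) (hxy : G.Adj x y)
    (hc : G.IsColoringOff x y (k - 2) c) {b : V} (hby : (G.nbhdCompl x).Adj b y) :
    ∃ s, (G.nbhdCompl x).Adj b s ∧ G.Adj y s ∧ c s = c b := by
  obtain ⟨hxb, -, hby', hnby⟩ := hby
  obtain ⟨w, hxw, hyw, hcw⟩ :=
    hc.exists_commonNeighbor_eq hχ hxy (hc.lt b (G.ne_of_adj hxb).symm hby')
  refine ⟨w, hc.nbhdCompl_adj_of_eq hxb hxw hby' (G.ne_of_adj hyw).symm ?_ hcw.symm, hyw, hcw⟩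
  rintro rfl
  exact hnby hyw.symm

end IsColoringOff

end SimpleGraph

namespace DoubleCritical

variable {V : Type} {G : SimpleGraph V} {k : ℕ} {x y : V}

theorem two_le (hdc : DoubleCritical G) (hχ : G.chromaticNumber = k) (hxy : G.Adj x y) :
    2 ≤ k := by
  have := hdc.2 x y hxy
  rw [hχ] at this
  exact_mod_cast le_trans le_add_self this

theorem exists_isColoringOff (hdc : DoubleCritical G) (hχ : G.chromaticNumber = k)
    (hxy : G.Adj x y) : ∃ c : V → ℕ, G.IsColoringOff x y (k - 2) c := by
  have h := hdc.2 x y hxy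
  rw [hχ, show (k : ℕ∞) = ((k - 2 : ℕ) : ℕ∞) + 2 by
    norm_cast; have := hdc.two_le hχ hxy; omega] at h
  obtain ⟨C⟩ := chromaticNumber_le_iff_colorable.1 ((ENat.add_le_add_iff_right (by simp)).1 h)
  classical
  refine ⟨fun v => if hv : v ∈ ({x, y}ᶜ : Set V) then C ⟨v, hv⟩ else 0,
    fun w hwx hwy => ?_, fun a b hax hay hbx hby hab => ?_⟩
  · simp [hwx, hwy]
  · have hadj : (G.induce ({x, y}ᶜ : Set V)).Adj ⟨a, by simp [hax, hay]⟩
        ⟨b, by simp [hbx, hby]⟩ := hab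
    simpa [hax, hay, hbx, hby, Fin.val_inj] using C.valid hadj

theorem exists_nbhdCompl_adj (hdc : DoubleCritical G) (hχ : G.chromaticNumber = k)
    {b t : V} (hbt : (G.nbhdCompl x).Adj b t) : ∃ s, (G.nbhdCompl x).Adj b s ∧ G.Adj t s := by
  obtain ⟨c, hc⟩ := hdc.exists_isColoringOff hχ hbt.2.1
  obtain ⟨s, hbs, hts, -⟩ := hc.exists_nbhdCompl_adj hχ hbt.2.1 hbt
  exact ⟨s, hbs, hts⟩

variable [Fintype V] [DecidableRel G.Adj]

theorem sub_two_le_card_neighborFinset_inter [DecidableEq V] (hdc : DoubleCritical G)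
    (hχ : G.chromaticNumber = k) {t : V} (hxt : G.Adj x t) :
    k - 2 ≤ #(G.neighborFinset x ∩ G.neighborFinset t) := by
  obtain ⟨c, hc⟩ := hdc.exists_isColoringOff hχ hxt
  calc k - 2 = #(range (k - 2)) := (card_range _).symm
    _ ≤ #((G.neighborFinset x ∩ G.neighborFinset t).image c) := card_le_card fun i hi => by
        obtain ⟨w, hxw, htw, rfl⟩ := hc.exists_commonNeighbor_eq hχ hxt (mem_range.1 hi)
        exact mem_image_of_mem c (by simp [hxw, htw])
    _ ≤ _ := card_image_le

theorem eq_or_eq_of_nbhdCompl_adj (hdc : DoubleCritical G) (hχ : G.chromaticNumber = k)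
    (hdeg : G.degree x = k + 1) {t a b w : V} (ha : (G.nbhdCompl x).Adj t a)
    (hb : (G.nbhdCompl x).Adj t b) (hab : a ≠ b) (hw : (G.nbhdCompl x).Adj t w) :
    w = a ∨ w = b := by
  classical
  by_contra! hne
  have hcommon := hdc.sub_two_le_card_neighborFinset_inter hχ ha.1
  have hk := hdc.two_le hχ ha.1
  have hsub : {a, b, w} ∪ (G.neighborFinset x ∩ G.neighborFinset t) ⊆
      (G.neighborFinset x).erase t := by
    intro v hv
    simp only [mem_union, mem_insert, mem_singleton, mem_inter, mem_neighborFinset] at hv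
    rcases hv with (rfl | rfl | rfl) | ⟨hxv, htv⟩
    · simp [ha.2.1, ha.2.2.1.symm]
    · simp [hb.2.1, hb.2.2.1.symm]
    · simp [hw.2.1, hw.2.2.1.symm]
    · simp [hxv, (G.ne_of_adj htv).symm]
  have hdisj : Disjoint ({a, b, w} : Finset V) (G.neighborFinset x ∩ G.neighborFinset t) := by
    simp [ha.2.2.2, hb.2.2.2, hw.2.2.2]
  have := card_le_card hsub
  rw [card_union_of_disjoint hdisj, card_erase_of_mem (by simpa using ha.1),
    card_neighborFinset_eq_degree, hdeg, card_insert_of_notMem (by simp [hab, hne.1.symm]),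
    card_pair hne.2.symm] at this
  omega

theorem nbhdCompl_cliqueFree_three (hdc : DoubleCritical G) (hχ : G.chromaticNumber = k)
    (hdeg : G.degree x = k + 1) : (G.nbhdCompl x).CliqueFree 3 := by
  classical
  intro S hS
  obtain ⟨a, b, c, hab, hac, hbc, rfl⟩ := is3Clique_iff.1 hS
  obtain ⟨s, hbs, has⟩ := hdc.exists_nbhdCompl_adj hχ hab.symm
  rcases hdc.eq_or_eq_of_nbhdCompl_adj hχ hdeg hab.symm hbc hac.ne hbs with rfl | rfl
  · exact G.loopless.irrefl _ has
  · exact hac.2.2.2 has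

theorem card_filter_eq_le_two (hdc : DoubleCritical G) (hχ : G.chromaticNumber = k)
    (hdeg : G.degree x = k + 1) {S : Finset V} {c : V → ℕ} (hS : ∀ a ∈ S, G.Adj x a)
    (hc : ∀ a ∈ S, ∀ b ∈ S, a ≠ b → c a = c b → ¬G.Adj a b) (i : ℕ) :
    #{a ∈ S | c a = i} ≤ 2 := by
  classical
  by_contra! h
  obtain ⟨a, ha, b, hb, d, hd, hab, had, hbd⟩ := two_lt_card.1 h
  simp only [mem_filter] at ha hb hd
  have hadj : ∀ u v, u ∈ S ∧ c u = i → v ∈ S ∧ c v = i → u ≠ v → (G.nbhdCompl x).Adj u v :=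
    fun u v hu hv huv =>
      ⟨hS u hu.1, hS v hv.1, huv, hc u hu.1 v hv.1 huv (hu.2.trans hv.2.symm)⟩
  exact hdc.nbhdCompl_cliqueFree_three hχ hdeg {a, b, d}
    (is3Clique_triple_iff.2 ⟨hadj a b ha hb hab, hadj a d ha hd had, hadj b d hb hd hbd⟩)

theorem not_forall_nbhdCompl_adj_eq_or_eq (hdc : DoubleCritical G) (hχ : G.chromaticNumber = k)
    (hdeg : G.degree x = k + 1) {u v w : V} (hxu : G.Adj x u) (hxv : G.Adj x v)
    (huv : G.Adj u v) :
    ¬∀ a b, (G.nbhdCompl x).Adj a b → a ≠ u → a ≠ v → b ≠ u → b ≠ v → a = w ∨ b = w := by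
  classical
  intro h
  -- `x` keeps a colour of its own, so the `k - 1` vertices of `S` share `k - 3` colours, each at
  -- most twice: two colours repeat, on two disjoint edges of `H_x`.
  obtain ⟨c, hc⟩ := hdc.exists_isColoringOff hχ huv
  have hxu' := G.ne_of_adj hxu
  have hxv' := G.ne_of_adj hxv
  set S := ((G.neighborFinset x).erase u).erase v with hSdef
  have hS : ∀ a ∈ S, G.Adj x a ∧ a ≠ u ∧ a ≠ v := by
    intro a ha
    simp only [hSdef, mem_erase, mem_neighborFinset] at ha
    exact ⟨ha.2.2, ha.2.1, ha.1⟩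
  have hcx : c x < k - 2 := hc.lt x hxu' hxv'
  have hcard : #S = k - 1 := by
    rw [card_erase_of_mem (by simp [(G.ne_of_adj huv).symm, hxv]),
      card_erase_of_mem (by simpa using hxu), card_neighborFinset_eq_degree, hdeg]
    omega
  have himage : S.image c ⊆ (range (k - 2)).erase (c x) := by
    intro i hi
    obtain ⟨a, ha, rfl⟩ := mem_image.1 hi
    obtain ⟨hxa, hau, hav⟩ := hS a ha
    exact mem_erase.2 ⟨(hc.ne x a hxu' hxv' hau hav hxa).symm, mem_range.2 (hc.lt a hau hav)⟩
  have hcount := card_eq_card_image_add_card_repeatedValues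
    (hdc.card_filter_eq_le_two hχ hdeg (fun a ha => (hS a ha).1) fun a ha b hb _ hab hadj =>
      hc.ne a b (hS a ha).2.1 (hS a ha).2.2 (hS b hb).2.1 (hS b hb).2.2 hadj hab)
  have := card_le_card himage
  rw [card_erase_of_mem (mem_range.2 hcx), card_range] at this
  obtain ⟨i, hi, j, hj, hij⟩ := one_lt_card.1 (show 1 < #(S.repeatedValues c) by omega)
  have hpair : ∀ a ∈ S, ∀ b ∈ S, a ≠ b → c a = c b → a = w ∨ b = w := by
    intro a ha b hb hab hcab
    obtain ⟨hxa, hau, hav⟩ := hS a ha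
    obtain ⟨hxb, hbu, hbv⟩ := hS b hb
    exact h a b ⟨hxa, hxb, hab, fun hadj => hc.ne a b hau hav hbu hbv hadj hcab⟩ hau hav hbu hbv
  obtain ⟨a, ha, b, hb, hab, rfl, hba⟩ := mem_repeatedValues.1 hi
  obtain ⟨a', ha', b', hb', hab', rfl, hba'⟩ := mem_repeatedValues.1 hj
  have := hpair a ha b hb hab hba.symm
  have := hpair a' ha' b' hb' hab' hba'.symm
  grind

theorem not_isVertexCover_path (hdc : DoubleCritical G) (hχ : G.chromaticNumber = k)
    (hdeg : G.degree x = k + 1) {a b c d : V} (hab : (G.nbhdCompl x).Adj a b)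
    (hbc : (G.nbhdCompl x).Adj b c) (hcd : (G.nbhdCompl x).Adj c d) (hac : a ≠ c) (hbd : b ≠ d)
    (had : a ≠ d) : ¬(G.nbhdCompl x).IsVertexCover {a, b, c, d} := by
  intro hcover
  have nb := fun w => hdc.eq_or_eq_of_nbhdCompl_adj hχ hdeg (w := w) hab.symm hbc hac
  have nc := fun w => hdc.eq_or_eq_of_nbhdCompl_adj hχ hdeg (w := w) hbc.symm hcd hbd
  have hbd' : G.Adj b d := adj_of_not_nbhdCompl_adj hbc.1 hcd.2.1 hbd fun h =>
    (nb d h).elim had.symm hcd.ne.symm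
  refine hdc.not_forall_nbhdCompl_adj_eq_or_eq hχ hdeg hbc.1 hcd.2.1 hbd' (w := a) ?_
  intro u v huv hub hud hvb hvd
  have hmem := hcover huv
  simp only [Set.mem_insert_iff, Set.mem_singleton_iff] at hmem
  have := huv.symm
  have := huv.ne
  grind

theorem not_isVertexCover_pentagon (hdc : DoubleCritical G) (hχ : G.chromaticNumber = k)
    (hdeg : G.degree x = k + 1) {v₀ v₁ v₂ v₃ v₄ : V} (h₀₁ : (G.nbhdCompl x).Adj v₀ v₁)
    (h₁₂ : (G.nbhdCompl x).Adj v₁ v₂) (h₂₃ : (G.nbhdCompl x).Adj v₂ v₃)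
    (h₃₄ : (G.nbhdCompl x).Adj v₃ v₄) (h₄₀ : (G.nbhdCompl x).Adj v₄ v₀)
    (h₀₂ : v₀ ≠ v₂) (h₁₃ : v₁ ≠ v₃) (h₀₃ : v₀ ≠ v₃) :
    ¬(G.nbhdCompl x).IsVertexCover {v₀, v₁, v₂, v₃, v₄} := by
  intro hcover
  have n₁ := fun w => hdc.eq_or_eq_of_nbhdCompl_adj hχ hdeg (w := w) h₀₁.symm h₁₂ h₀₂
  have n₂ := fun w => hdc.eq_or_eq_of_nbhdCompl_adj hχ hdeg (w := w) h₁₂.symm h₂₃ h₁₃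
  have n₄ := fun w => hdc.eq_or_eq_of_nbhdCompl_adj hχ hdeg (w := w) h₃₄.symm h₄₀ h₀₃.symm
  have h₁₃' : G.Adj v₁ v₃ := adj_of_not_nbhdCompl_adj h₁₂.1 h₃₄.1 h₁₃ fun h =>
    (n₁ v₃ h).elim h₀₃.symm h₂₃.ne.symm
  refine hdc.not_forall_nbhdCompl_adj_eq_or_eq hχ hdeg h₁₂.1 h₃₄.1 h₁₃' (w := v₀) ?_
  intro u v huv hu₁ hu₃ hv₁ hv₃
  have hmem := hcover huv
  simp only [Set.mem_insert_iff, Set.mem_singleton_iff] at hmem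
  have := huv.symm
  have := huv.ne
  grind

theorem not_isVertexCover_hexagon (hdc : DoubleCritical G) (hχ : G.chromaticNumber = k)
    (hdeg : G.degree x = k + 1) {v₀ v₁ v₂ v₃ v₄ v₅ : V} (h₀₁ : (G.nbhdCompl x).Adj v₀ v₁)
    (h₁₂ : (G.nbhdCompl x).Adj v₁ v₂) (h₂₃ : (G.nbhdCompl x).Adj v₂ v₃)
    (h₃₄ : (G.nbhdCompl x).Adj v₃ v₄) (h₄₅ : (G.nbhdCompl x).Adj v₄ v₅)
    (h₅₀ : (G.nbhdCompl x).Adj v₅ v₀) (h₀₂ : v₀ ≠ v₂) (h₂₄ : v₂ ≠ v₄) (h₀₄ : v₀ ≠ v₄)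
    (h₁₃ : v₁ ≠ v₃) (h₁₄ : v₁ ≠ v₄) :
    ¬(G.nbhdCompl x).IsVertexCover {v₀, v₁, v₂, v₃, v₄, v₅} := by
  intro hcover
  have n₁ := fun w => hdc.eq_or_eq_of_nbhdCompl_adj hχ hdeg (w := w) h₀₁.symm h₁₂ h₀₂
  have n₂ := fun w => hdc.eq_or_eq_of_nbhdCompl_adj hχ hdeg (w := w) h₁₂.symm h₂₃ h₁₃
  have n₃ := fun w => hdc.eq_or_eq_of_nbhdCompl_adj hχ hdeg (w := w) h₂₃.symm h₃₄ h₂₄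
  have n₅ := fun w => hdc.eq_or_eq_of_nbhdCompl_adj hχ hdeg (w := w) h₄₅.symm h₅₀ h₀₄.symm
  have h₂₄' : G.Adj v₂ v₄ := adj_of_not_nbhdCompl_adj h₂₃.1 h₄₅.1 h₂₄ fun h =>
    (n₂ v₄ h).elim h₁₄.symm h₃₄.ne.symm
  refine hdc.not_forall_nbhdCompl_adj_eq_or_eq hχ hdeg h₂₃.1 h₄₅.1 h₂₄' (w := v₀) ?_
  intro u v huv hu₂ hu₄ hv₂ hv₄
  have hmem := hcover huv
  simp only [Set.mem_insert_iff, Set.mem_singleton_iff] at hmem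
  have := huv.symm
  have := huv.ne
  grind

theorem not_isVertexCover_of_adj_of_adj (hdc : DoubleCritical G) (hχ : G.chromaticNumber = k)
    (hx : G.degree x = k + 1) {p q r s : V} (hpq : (G.nbhdCompl x).Adj p q)
    (hrs : (G.nbhdCompl x).Adj r s) (hpr : p ≠ r) (hps : p ≠ s) (hqr : q ≠ r) (hqs : q ≠ s) :
    ¬(G.nbhdCompl x).IsVertexCover {p, q, r, s} := by
  intro hcover
  by_cases hcross : (G.nbhdCompl x).Adj p r ∨ (G.nbhdCompl x).Adj p s ∨
      (G.nbhdCompl x).Adj q r ∨ (G.nbhdCompl x).Adj q s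
  · rcases hcross with h | h | h | h
    · exact hdc.not_isVertexCover_path hχ hx hpq.symm h hrs hqr hps hqs (hcover.subset (by grind))
    · exact hdc.not_isVertexCover_path hχ hx hpq.symm h hrs.symm hqs hpr hqr
        (hcover.subset (by grind))
    · exact hdc.not_isVertexCover_path hχ hx hpq h hrs hpr hqs hps (hcover.subset (by grind))
    · exact hdc.not_isVertexCover_path hχ hx hpq h hrs.symm hps hqr hpr (hcover.subset (by grind))
  simp only [not_or] at hcross
  obtain ⟨p', hpp', hqp'⟩ := hdc.exists_nbhdCompl_adj hχ hpq
  obtain ⟨q', hqq', hpq'⟩ := hdc.exists_nbhdCompl_adj hχ hpq.symm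
  obtain ⟨p'', hp'p'', hpp''⟩ := hdc.exists_nbhdCompl_adj hχ hpp'.symm
  obtain ⟨q'', hq'q'', hqq''⟩ := hdc.exists_nbhdCompl_adj hχ hqq'.symm
  have hp'q' : p' ≠ q' := by
    rintro rfl
    exact hqq'.2.2.2 hqp'
  have hp'' : p'' = r ∨ p'' = s := by
    have hmem := hcover hp'p''
    simp only [Set.mem_insert_iff, Set.mem_singleton_iff] at hmem
    have := hpp'.ne; have := G.ne_of_adj hqp'; have := G.ne_of_adj hpp''
    have := hp'p''.2.2.2; have := hqp'.symm
    grind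
  have hq'' : q'' = r ∨ q'' = s := by
    have hmem := hcover hq'q''
    simp only [Set.mem_insert_iff, Set.mem_singleton_iff] at hmem
    have := hqq'.ne; have := G.ne_of_adj hpq'; have := G.ne_of_adj hqq''
    have := hq'q''.2.2.2; have := hpq'.symm
    grind
  have hq'r : q' ≠ r := by
    rintro rfl
    exact hcross.2.2.1 hqq'
  have hq's : q' ≠ s := by
    rintro rfl
    exact hcross.2.2.2 hqq'
  rcases hp'' with rfl | rfl <;> rcases hq'' with rfl | rfl
  · rcases hdc.eq_or_eq_of_nbhdCompl_adj hχ hx hrs hp'p''.symm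
      (by rintro rfl; exact hcross.2.1 hpp') hq'q''.symm with h | h
    exacts [hq's h, hp'q' h.symm]
  · exact hdc.not_isVertexCover_hexagon hχ hx hp'p''.symm hpp'.symm hpq hqq' hq'q'' hrs.symm
      hpr.symm (G.ne_of_adj hpq') hq'r.symm (G.ne_of_adj hqp').symm hp'q'
      (hcover.subset (by grind))
  · exact hdc.not_isVertexCover_hexagon hχ hx hp'p''.symm hpp'.symm hpq hqq' hq'q'' hrs
      hps.symm (G.ne_of_adj hpq') hq's.symm (G.ne_of_adj hqp').symm hp'q'
      (hcover.subset (by grind))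
  · rcases hdc.eq_or_eq_of_nbhdCompl_adj hχ hx hrs.symm hp'p''.symm
      (by rintro rfl; exact hcross.1 hpp') hq'q''.symm with h | h
    exacts [hq'r h, hp'q' h.symm]

variable {c : V → ℕ}

theorem card_repeatedValues_eq_two [DecidableEq V] (hdc : DoubleCritical G)
    (hχ : G.chromaticNumber = k) (hxy : G.Adj x y) (hx : G.degree x = k + 1)
    (hc : G.IsColoringOff x y (k - 2) c) :
    #(((G.neighborFinset x).erase y).repeatedValues c) = 2 := by
  have hN : ∀ a ∈ (G.neighborFinset x).erase y, G.Adj x a ∧ a ≠ y := fun a ha => by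
    simp only [mem_erase, mem_neighborFinset] at ha
    exact ⟨ha.2, ha.1⟩
  have himage : ((G.neighborFinset x).erase y).image c = range (k - 2) := by
    ext i
    simp only [mem_image, mem_erase, mem_neighborFinset, mem_range]
    constructor
    · rintro ⟨a, ⟨hay, hxa⟩, rfl⟩
      exact hc.lt a (G.ne_of_adj hxa).symm hay
    · intro hi
      obtain ⟨w, hxw, hyw, rfl⟩ := hc.exists_commonNeighbor_eq hχ hxy hi
      exact ⟨w, ⟨(G.ne_of_adj hyw).symm, hxw⟩, rfl⟩
  have hcount := card_eq_card_image_add_card_repeatedValues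
    (hdc.card_filter_eq_le_two hχ hx (fun a ha => (hN a ha).1) fun a ha b hb _ hcab hadj =>
      hc.ne a b (G.ne_of_adj (hN a ha).1).symm (hN a ha).2 (G.ne_of_adj (hN b hb).1).symm
        (hN b hb).2 hadj hcab)
  rw [himage, card_range, card_erase_of_mem (by simpa using hxy), card_neighborFinset_eq_degree,
    hx] at hcount
  have := hdc.two_le hχ hxy
  omega

theorem not_nbhdCompl_adj_of_unique (hdc : DoubleCritical G) (hχ : G.chromaticNumber = k)
    (hxy : G.Adj x y) (hy : G.degree y = k + 1) (hc : G.IsColoringOff x y (k - 2) c)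
    {a b b' : V} (hab : (G.nbhdCompl x).Adj a b) (hbb' : (G.nbhdCompl x).Adj b b')
    (hb'a : b' ≠ a) (hya : G.Adj y a) (hyb : G.Adj y b) (hyb' : G.Adj y b')
    (hua : ∀ u, G.Adj x u → u ≠ y → c u = c a → u = a)
    (hub : ∀ u, G.Adj x u → u ≠ y → c u = c b → u = b) : False := by
  have hcab : c a ≠ c b := fun h => hab.ne (hua b hab.2.1 (G.ne_of_adj hyb).symm h.symm).symm
  have hcb' : c b' ≠ c b := fun h => hbb'.ne (hub b' hbb'.2.1 (G.ne_of_adj hyb').symm h).symm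
  -- A second vertex of `b`'s colour in `N(y)` would be a third non-neighbour of `b` there.
  have hubY : ∀ v, G.Adj y v → v ≠ x → c v = c b → v = b := by
    intro v hyv hvx hcv
    by_contra hvb
    have hbv : (G.nbhdCompl y).Adj b v := ⟨hyb, hyv, Ne.symm hvb, fun h =>
      hc.ne b v (G.ne_of_adj hab.2.1).symm (G.ne_of_adj hyb).symm hvx (G.ne_of_adj hyv).symm h
        hcv.symm⟩
    rcases hdc.eq_or_eq_of_nbhdCompl_adj hχ hy ⟨hyb, hya, hab.ne.symm, fun h => hab.2.2.2 h.symm⟩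
      ⟨hyb, hyb', hbb'.ne, hbb'.2.2.2⟩ hb'a.symm hbv with rfl | rfl
    · exact hcab hcv
    · exact hcb' hcv
  exact hab.2.2.2 (hc.adj_of_unique hχ hxy hab.1 (G.ne_of_adj hya).symm hyb
    (G.ne_of_adj hab.2.1).symm hcab hua hubY)

theorem isVertexCover_nbhdCompl (hdc : DoubleCritical G) (hχ : G.chromaticNumber = k)
    (hxy : G.Adj x y) (hx : G.degree x = k + 1) (hy : G.degree y = k + 1)
    (hc : G.IsColoringOff x y (k - 2) c) {p q r s : V}
    (hpq : (G.nbhdCompl x).Adj p q) (hrs : (G.nbhdCompl x).Adj r s)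
    (hpy : p ≠ y) (hqy : q ≠ y) (hry : r ≠ y) (hsy : s ≠ y)
    (hcpq : c q = c p) (hcrs : c s = c r) (hcpr : c p ≠ c r)
    (hyX : ∀ u, (G.nbhdCompl x).Adj y u → u ∈ ({y, p, q, r, s} : Set V) ∧
      ∀ w, (G.nbhdCompl x).Adj u w → w ∈ ({y, p, q, r, s} : Set V)) :
    (G.nbhdCompl x).IsVertexCover {y, p, q, r, s} := by
  classical
  have hR : ((G.neighborFinset x).erase y).repeatedValues c = {c p, c r} := by
    refine (eq_of_subset_of_card_le ?_ ?_).symm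
    · intro i hi
      simp only [mem_insert, mem_singleton] at hi
      rcases hi with rfl | rfl
      · exact mem_repeatedValues.2 ⟨p, by simp [hpy, hpq.1], q, by simp [hqy, hpq.2.1], hpq.ne,
          rfl, hcpq⟩
      · exact mem_repeatedValues.2 ⟨r, by simp [hry, hrs.1], s, by simp [hsy, hrs.2.1], hrs.ne,
          rfl, hcrs⟩
    · rw [hdc.card_repeatedValues_eq_two hχ hxy hx hc, card_pair hcpr]
  have htriangle : ∀ a u v, G.Adj x a → a ≠ y → a ≠ u → a ≠ v → (G.nbhdCompl x).Adj u v →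
      u ≠ y → v ≠ y → c u = c a → c v = c a → False := fun a u v hxa hay hau hav huv huy hvy
      hcu hcv => hdc.nbhdCompl_cliqueFree_three hχ hx {a, u, v} (is3Clique_triple_iff.2
        ⟨hc.nbhdCompl_adj_of_eq hxa huv.1 hay huy hau hcu.symm,
          hc.nbhdCompl_adj_of_eq hxa huv.2.1 hay hvy hav hcv.symm, huv⟩)
  have hunique : ∀ a, G.Adj x a → a ∉ ({y, p, q, r, s} : Set V) →
      ∀ u, G.Adj x u → u ≠ y → c u = c a → u = a := by
    intro a hxa haX u hxu huy hcu
    simp only [Set.mem_insert_iff, Set.mem_singleton_iff, not_or] at haX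
    by_contra hua
    have hmem : c a ∈ ((G.neighborFinset x).erase y).repeatedValues c :=
      mem_repeatedValues.2 ⟨u, by simp [huy, hxu], a, by simp [haX.1, hxa], hua, hcu, rfl⟩
    rw [hR, mem_insert, mem_singleton] at hmem
    rcases hmem with h | h
    · exact htriangle a p q hxa haX.1 haX.2.1 haX.2.2.1 hpq hpy hqy h.symm (hcpq.trans h.symm)
    · exact htriangle a r s hxa haX.1 haX.2.2.2.1 haX.2.2.2.2 hrs hry hsy h.symm
        (hcrs.trans h.symm)
  intro a b hab
  by_contra! h
  obtain ⟨b', hbb', hab'⟩ := hdc.exists_nbhdCompl_adj hχ hab.symm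
  have hyN : ∀ u, G.Adj x u → u ∉ ({y, p, q, r, s} : Set V) → G.Adj y u :=
    fun u hxu huX => adj_of_not_nbhdCompl_adj hxy hxu (by rintro rfl; simp at huX)
      fun h => huX (hyX u h).1
  have hb'y : b' ≠ y := by
    rintro rfl
    exact h.2 (hyX b hbb'.symm).1
  have hyb' : G.Adj y b' := adj_of_not_nbhdCompl_adj hxy hbb'.2.1 hb'y.symm fun h' =>
    h.2 ((hyX b' h').2 b hbb'.symm)
  exact hdc.not_nbhdCompl_adj_of_unique hχ hxy hy hc hab hbb' (G.ne_of_adj hab').symm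
    (hyN a hab.1 h.1) (hyN b hab.2.1 h.2) hyb' (hunique a hab.1 h.1) (hunique b hab.2.1 h.2)

theorem exists_nbhdCompl_adj_of_degree_eq (hdc : DoubleCritical G) (hχ : G.chromaticNumber = k)
    (hxy : G.Adj x y) (hx : G.degree x = k + 1) (hy : G.degree y = k + 1) :
    ∃ a, (G.nbhdCompl x).Adj y a := by
  classical
  by_contra! hyH
  obtain ⟨c, hc⟩ := hdc.exists_isColoringOff hχ hxy
  obtain ⟨i, j, hij, hR⟩ := card_eq_two.1 (hdc.card_repeatedValues_eq_two hχ hxy hx hc)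
  obtain ⟨p, hp, q, hq, hpq, rfl, hcq⟩ := mem_repeatedValues.1 (hR ▸ mem_insert_self _ _)
  obtain ⟨r, hr, s, hs, hrs, rfl, hcs⟩ :=
    mem_repeatedValues.1 (hR ▸ mem_insert_of_mem (mem_singleton_self _))
  simp only [mem_erase, mem_neighborFinset] at hp hq hr hs
  have hcover := hdc.isVertexCover_nbhdCompl hχ hxy hx hy hc
    (hc.nbhdCompl_adj_of_eq hp.2 hq.2 hp.1 hq.1 hpq hcq.symm)
    (hc.nbhdCompl_adj_of_eq hr.2 hs.2 hr.1 hs.1 hrs hcs.symm) hp.1 hq.1 hr.1 hs.1 hcq hcs hij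
    fun u hu => (hyH u hu).elim
  refine hdc.not_isVertexCover_of_adj_of_adj hχ hx
    (hc.nbhdCompl_adj_of_eq hp.2 hq.2 hp.1 hq.1 hpq hcq.symm)
    (hc.nbhdCompl_adj_of_eq hr.2 hs.2 hr.1 hs.1 hrs hcs.symm)
    (fun h => hij (by rw [h])) (fun h => hij (by rw [h, hcs]))
    (fun h => hij (by rw [← hcq, h])) (fun h => hij (by rw [← hcq, h, hcs])) ?_
  intro a b hab
  have hmem := hcover hab
  have := hyH a
  have := hyH b
  have := hab.symm
  simp only [Set.mem_insert_iff, Set.mem_singleton_iff] at hmem ⊢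
  grind

theorem not_nbhdCompl_adj_of_degree_eq (hdc : DoubleCritical G) (hχ : G.chromaticNumber = k)
    (hxy : G.Adj x y) (hx : G.degree x = k + 1) (hy : G.degree y = k + 1) (a₁ : V) :
    ¬(G.nbhdCompl x).Adj y a₁ := by
  intro hya₁
  -- `H_x` contains the path `z₁ a₁ y a₂ z₂`, where `zᵢ` repeats the colour of `aᵢ`; the next
  -- edges of `H_x` from `z₁` close it into a pentagon or a hexagon.
  obtain ⟨c, hc⟩ := hdc.exists_isColoringOff hχ hxy
  obtain ⟨a₂, hya₂, ha₁a₂⟩ := hdc.exists_nbhdCompl_adj hχ hya₁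
  obtain ⟨z₁, ha₁z₁, hyz₁, hcz₁⟩ := hc.exists_nbhdCompl_adj hχ hxy hya₁.symm
  obtain ⟨z₂, ha₂z₂, hyz₂, hcz₂⟩ := hc.exists_nbhdCompl_adj hχ hxy hya₂.symm
  have hca : c a₁ ≠ c a₂ := hc.ne a₁ a₂ (G.ne_of_adj hya₁.2.1).symm hya₁.ne.symm
    (G.ne_of_adj hya₂.2.1).symm hya₂.ne.symm ha₁a₂
  have hyz₁' := G.ne_of_adj hyz₁
  have hyz₂' := G.ne_of_adj hyz₂
  have hz₁z₂ : z₁ ≠ z₂ := fun h => hca (by rw [← hcz₁, ← hcz₂, h])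
  have ha₁z₂ : a₁ ≠ z₂ := fun h => hca (by rw [← hcz₂, h])
  have nY := fun w => hdc.eq_or_eq_of_nbhdCompl_adj hχ hx (w := w) hya₁ hya₂ (G.ne_of_adj ha₁a₂)
  have nA₁ := fun w => hdc.eq_or_eq_of_nbhdCompl_adj hχ hx (w := w) hya₁.symm ha₁z₁ hyz₁'
  have nA₂ := fun w => hdc.eq_or_eq_of_nbhdCompl_adj hχ hx (w := w) hya₂.symm ha₂z₂ hyz₂'
  have hcover := hdc.isVertexCover_nbhdCompl hχ hxy hx hy hc ha₁z₁ ha₂z₂ hya₁.ne.symm hyz₁'.symm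
    hya₂.ne.symm hyz₂'.symm hcz₁ hcz₂ hca fun u hu => by
      rcases nY u hu with rfl | rfl
      · exact ⟨by simp, fun w hw => by rcases nA₁ w hw with rfl | rfl <;> simp⟩
      · exact ⟨by simp, fun w hw => by rcases nA₂ w hw with rfl | rfl <;> simp⟩
  obtain ⟨z, hz₁z, ha₁z⟩ := hdc.exists_nbhdCompl_adj hχ ha₁z₁.symm
  by_cases hzz₂ : z = z₂
  · subst hzz₂
    exact hdc.not_isVertexCover_pentagon hχ hx hya₁ ha₁z₁ hz₁z ha₂z₂.symm hya₂.symm hyz₁' ha₁z₂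
      hyz₂' (hcover.subset (by grind))
  obtain ⟨z', hzz', hz₁z'⟩ := hdc.exists_nbhdCompl_adj hχ hz₁z.symm
  have hz' : z' = z₂ := by
    have hmem := hcover hzz'
    simp only [Set.mem_insert_iff, Set.mem_singleton_iff] at hmem
    have := hz₁z.ne; have := hzz'.ne; have := G.ne_of_adj ha₁z; have := G.ne_of_adj hz₁z'
    have := ha₁z₁.ne; have := hz₁z.symm; have := hzz'.symm
    grind
  subst hz'
  exact hdc.not_isVertexCover_hexagon hχ hx hya₁ ha₁z₁ hz₁z hzz' ha₂z₂.symm hya₂.symm hyz₁'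
    hz₁z₂ hyz₂' (G.ne_of_adj ha₁z) ha₁z₂ (hcover.subset (by grind))

end DoubleCritical

theorem stmt11_general {V : Type} [Fintype V] (G : SimpleGraph V) [DecidableRel G.Adj] (k : ℕ)
    (hdc : DoubleCritical G) (hchrom : G.chromaticNumber = k) :
    ∀ x y : V, G.Adj x y → ¬ (G.degree x = k + 1 ∧ G.degree y = k + 1) := by
  rintro x y hxy ⟨hx, hy⟩
  obtain ⟨a, ha⟩ := hdc.exists_nbhdCompl_adj_of_degree_eq hchrom hxy hx hy
  exact hdc.not_nbhdCompl_adj_of_degree_eq hchrom hxy hx hy a ha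

/-- In a non-complete double-critical `k`-chromatic graph, no two vertices of degree
`k + 1` are adjacent. -/
theorem stmt11 {V : Type} [Fintype V] (G : SimpleGraph V) [DecidableRel G.Adj] (k : ℕ)
    (hnc : G ≠ ⊤) (hdc : DoubleCritical G) (hchrom : G.chromaticNumber = k) :
    ∀ x y : V, G.Adj x y → ¬ (G.degree x = k + 1 ∧ G.degree y = k + 1) :=
  stmt11_general G k hdc hchrom
end

section
/- Let G be a graph decomposable into non-empty graphs G₁ and G₂, i.e. V(G) is the disjoint union of V(G₁) and V(G₂), the induced subgraphs on these sets are G₁ and G₂, and every vertex of G₁ is adjacent in G to every vertex of G₂. Then G is double-critical if and only if both G₁ and G₂ are double-critical. -/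
open SimpleGraph

/-!
The chromatic number is additive over a join: the colours a colouring of `G` uses on the
two sides are disjoint, and colourings of the two sides with disjoint palettes combine to a
colouring of `G`. Deleting vertices from `G` leaves the join of what remains of the two
sides, so the chromatic number of every vertex-deleted subgraph of `G` splits as a sum,
and criticality transfers in both directions; for an edge across the join,
vertex-criticality of both sides gives the drop by two. Cancelling in `ℕ∞` is licensed
because a vertex-critical graph has finite chromatic number.
-/

namespace SimpleGraph

variable {V α : Type*} {G : SimpleGraph V}

lemma Coloring.chromaticNumber_induce_le_encard_image [Finite α] (C : G.Coloring α)
    (A : Set V) :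
    (G.induce A).chromaticNumber ≤ (C '' A).encard := by
  have : Fintype (C '' A) := Fintype.ofFinite _
  let C' : (G.induce A).Coloring (C '' A) :=
    Coloring.mk (fun a => ⟨C a, a, a.2, rfl⟩) fun hab h => C.valid hab (congrArg Subtype.val h)
  rw [Set.encard, ENat.card_eq_coe_fintype_card]
  exact C'.colorable.chromaticNumber_le

lemma Colorable.of_induce_of_union_eq_univ {A B : Set V} (hAB : A ∪ B = Set.univ) {m n : ℕ}
    (hA : (G.induce A).Colorable m) (hB : (G.induce B).Colorable n) : G.Colorable (m + n) := by
  classical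
  obtain ⟨C₁⟩ := hA
  obtain ⟨C₂⟩ := hB
  have hmem (v : V) (hv : v ∉ A) : v ∈ B := by
    simpa [hv] using hAB.ge (Set.mem_univ v)
  let C : G.Coloring (Fin m ⊕ Fin n) :=
    Coloring.mk
      (fun v => if hv : v ∈ A then .inl (C₁ ⟨v, hv⟩) else .inr (C₂ ⟨v, hmem v hv⟩))
      fun {v w} hvw => by
        by_cases hv : v ∈ A <;> by_cases hw : w ∈ A <;>
          simp only [hv, hw, dite_true, dite_false, ne_eq, reduceCtorEq, not_false_eq_true,
            Sum.inl.injEq, Sum.inr.injEq]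
        · exact C₁.valid hvw
        · exact C₂.valid hvw
  simpa using C.colorable

lemma chromaticNumber_le_add_of_union_eq_univ {A B : Set V} (hAB : A ∪ B = Set.univ) :
    G.chromaticNumber ≤ (G.induce A).chromaticNumber + (G.induce B).chromaticNumber := by
  by_cases hA : (G.induce A).chromaticNumber = ⊤
  · simp [hA]
  by_cases hB : (G.induce B).chromaticNumber = ⊤
  · simp [hB]
  rw [← ENat.natCast_toNat hA, ← ENat.natCast_toNat hB, ← Nat.cast_add]
  exact (Colorable.of_induce_of_union_eq_univ hAB (colorable_of_chromaticNumber_ne_top hA)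
    (colorable_of_chromaticNumber_ne_top hB)).chromaticNumber_le

lemma add_chromaticNumber_le {A B : Set V} (hAB : ∀ a ∈ A, ∀ b ∈ B, G.Adj a b) :
    (G.induce A).chromaticNumber + (G.induce B).chromaticNumber ≤ G.chromaticNumber := by
  refine le_iInf₂ fun m (hm : G.Colorable m) => ?_
  obtain ⟨C⟩ := hm
  have hdisj : Disjoint (C '' A) (C '' B) := by
    rw [Set.disjoint_left]
    rintro _ ⟨a, ha, rfl⟩ ⟨b, hb, hab⟩
    exact C.valid (hAB a ha b hb) hab.symm
  calc (G.induce A).chromaticNumber + (G.induce B).chromaticNumber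
      ≤ (C '' A).encard + (C '' B).encard :=
        add_le_add (C.chromaticNumber_induce_le_encard_image A)
          (C.chromaticNumber_induce_le_encard_image B)
    _ = (C '' A ∪ C '' B).encard := (Set.encard_union_eq hdisj).symm
    _ ≤ m := Set.encard_le_card.trans_eq (by simp)

def induceInduceComm (G : SimpleGraph V) (A Y : Set V) :
    (G.induce Y).induce (Subtype.val ⁻¹' A) ≃g (G.induce A).induce (Subtype.val ⁻¹' Y) where
  toFun x := ⟨⟨x.1.1, x.2⟩, x.1.2⟩
  invFun x := ⟨⟨x.1.1, x.2⟩, x.1.2⟩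
  map_rel_iff' := Iff.rfl

structure IsJoin (G : SimpleGraph V) (A B : Set V) : Prop where
  union_eq_univ : A ∪ B = Set.univ
  adj : ∀ a ∈ A, ∀ b ∈ B, G.Adj a b

namespace IsJoin

variable {A B : Set V}

lemma symm (h : G.IsJoin A B) : G.IsJoin B A :=
  ⟨Set.union_comm A B ▸ h.union_eq_univ, fun b hb a ha => (h.adj a ha b hb).symm⟩

lemma disjoint (h : G.IsJoin A B) : Disjoint A B :=
  Set.disjoint_left.2 fun v hA hB => (h.adj v hA v hB).ne rfl

lemma induce (h : G.IsJoin A B) (Y : Set V) :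
    (G.induce Y).IsJoin (Subtype.val ⁻¹' A) (Subtype.val ⁻¹' B) :=
  ⟨by rw [← Set.preimage_union, h.union_eq_univ, Set.preimage_univ],
    fun a ha b hb => h.adj a ha b hb⟩

lemma chromaticNumber_eq (h : G.IsJoin A B) :
    G.chromaticNumber = (G.induce A).chromaticNumber + (G.induce B).chromaticNumber :=
  (chromaticNumber_le_add_of_union_eq_univ h.union_eq_univ).antisymm
    (add_chromaticNumber_le h.adj)

lemma chromaticNumber_induce_eq (h : G.IsJoin A B) (Y : Set V) :
    (G.induce Y).chromaticNumber = ((G.induce A).induce (Subtype.val ⁻¹' Y)).chromaticNumber +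
      ((G.induce B).induce (Subtype.val ⁻¹' Y)).chromaticNumber := by
  rw [(h.induce Y).chromaticNumber_eq, chromaticNumber_congr (induceInduceComm G A Y),
    chromaticNumber_congr (induceInduceComm G B Y)]

lemma chromaticNumber_induce_compl_singleton (h : G.IsJoin A B) (a : A) :
    (G.induce {a.1}ᶜ).chromaticNumber =
      ((G.induce A).induce {a}ᶜ).chromaticNumber + (G.induce B).chromaticNumber := by
  have hA : (Subtype.val ⁻¹' {a.1}ᶜ : Set A) = {a}ᶜ := by ext; simp [Subtype.ext_iff]
  have hB : B ⊆ {a.1}ᶜ := Set.subset_compl_singleton_iff.2 (h.disjoint.notMem_of_mem_left a.2)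
  rw [h.chromaticNumber_induce_eq, hA, Set.preimage_val_eq_univ_of_subset hB,
    chromaticNumber_congr (induceUnivIso _)]

lemma chromaticNumber_induce_compl_pair (h : G.IsJoin A B) (x y : A) :
    (G.induce {x.1, y.1}ᶜ).chromaticNumber =
      ((G.induce A).induce {x, y}ᶜ).chromaticNumber + (G.induce B).chromaticNumber := by
  have hA : (Subtype.val ⁻¹' {x.1, y.1}ᶜ : Set A) = {x, y}ᶜ := by ext; simp [Subtype.ext_iff]
  have hB : B ⊆ {x.1, y.1}ᶜ := Set.subset_compl_iff_disjoint_left.2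
    (h.disjoint.mono_left (Set.pair_subset x.2 y.2))
  rw [h.chromaticNumber_induce_eq, hA, Set.preimage_val_eq_univ_of_subset hB,
    chromaticNumber_congr (induceUnivIso _)]

lemma chromaticNumber_induce_compl_pair_left_right (h : G.IsJoin A B) (a : A) (b : B) :
    (G.induce {a.1, b.1}ᶜ).chromaticNumber =
      ((G.induce A).induce {a}ᶜ).chromaticNumber +
        ((G.induce B).induce {b}ᶜ).chromaticNumber := by
  have hA : (Subtype.val ⁻¹' {a.1, b.1}ᶜ : Set A) = {a}ᶜ := by
    ext z
    have : z.1 ≠ b.1 := fun hzb => h.disjoint.notMem_of_mem_left z.2 (hzb ▸ b.2)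
    simp [Subtype.ext_iff, this]
  have hB : (Subtype.val ⁻¹' {a.1, b.1}ᶜ : Set B) = {b}ᶜ := by
    ext z
    have : z.1 ≠ a.1 := fun hza => h.disjoint.notMem_of_mem_left a.2 (hza ▸ z.2)
    simp [Subtype.ext_iff, this]
  rw [h.chromaticNumber_induce_eq, hA, hB]

end IsJoin

end SimpleGraph

lemma VertexCritical.chromaticNumber_ne_top {V : Type} {G : SimpleGraph V}
    (hG : VertexCritical G) :
    G.chromaticNumber ≠ ⊤ := by
  rcases isEmpty_or_nonempty V with _ | ⟨⟨v⟩⟩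
  · simp [chromaticNumber_eq_zero_of_isEmpty]
  · have hv : (G.induce {v}).chromaticNumber ≤ 1 := chromaticNumber_le_one_of_subsingleton _
    have hle : G.chromaticNumber ≤ (G.induce {v}ᶜ).chromaticNumber + 1 :=
      (chromaticNumber_le_add_of_union_eq_univ (Set.compl_union_self {v})).trans (by gcongr)
    exact ne_top_of_le_ne_top (WithTop.add_ne_top.2 ⟨(hG v).ne_top, ENat.one_ne_top⟩) hle

namespace SimpleGraph.IsJoin

variable {V : Type} {G : SimpleGraph V} {A B : Set V}

theorem doubleCritical_induce_left (h : G.IsJoin A B) (hG : DoubleCritical G) :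
    DoubleCritical (G.induce A) := by
  have hB : (G.induce B).chromaticNumber ≠ ⊤ := ne_top_of_le_ne_top hG.1.chromaticNumber_ne_top
    (chromaticNumber_mono_of_hom (Embedding.induce B).toHom)
  refine ⟨fun a => ?_, fun x y hxy => ?_⟩
  · have ha := hG.1 a
    rw [h.chromaticNumber_induce_compl_singleton, h.chromaticNumber_eq] at ha
    exact lt_of_add_lt_add_right ha
  · have hxy := hG.2 x y hxy
    rw [h.chromaticNumber_induce_compl_pair, h.chromaticNumber_eq, add_right_comm] at hxy
    exact (WithTop.add_le_add_iff_right hB).1 hxy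

lemma chromaticNumber_induce_compl_singleton_lt (h : G.IsJoin A B)
    (hA : VertexCritical (G.induce A)) (hB : (G.induce B).chromaticNumber ≠ ⊤) (a : A) :
    (G.induce {a.1}ᶜ).chromaticNumber < G.chromaticNumber := by
  rw [h.chromaticNumber_induce_compl_singleton, h.chromaticNumber_eq]
  exact (ENat.add_lt_add_iff_right hB).2 (hA a)

lemma chromaticNumber_induce_compl_pair_add_two_le (h : G.IsJoin A B)
    (hA : DoubleCritical (G.induce A)) (hB : VertexCritical (G.induce B)) {x y : V}
    (hx : x ∈ A) (hxy : G.Adj x y) :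
    (G.induce {x, y}ᶜ).chromaticNumber + 2 ≤ G.chromaticNumber := by
  rw [h.chromaticNumber_eq]
  rcases h.union_eq_univ.ge (Set.mem_univ y) with hy | hy
  · rw [h.chromaticNumber_induce_compl_pair ⟨x, hx⟩ ⟨y, hy⟩, add_right_comm]
    exact add_le_add_left (hA.2 ⟨x, hx⟩ ⟨y, hy⟩ hxy) _
  · rw [h.chromaticNumber_induce_compl_pair_left_right ⟨x, hx⟩ ⟨y, hy⟩]
    calc _ = (((G.induce A).induce {⟨x, hx⟩}ᶜ).chromaticNumber + 1) +
          (((G.induce B).induce {⟨y, hy⟩}ᶜ).chromaticNumber + 1) := by ring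
      _ ≤ _ := add_le_add (Order.add_one_le_of_lt (hA.1 _)) (Order.add_one_le_of_lt (hB _))

theorem doubleCritical (h : G.IsJoin A B) (hA : DoubleCritical (G.induce A))
    (hB : DoubleCritical (G.induce B)) :
    DoubleCritical G := by
  refine ⟨fun v => ?_, fun x y hxy => ?_⟩
  · rcases h.union_eq_univ.ge (Set.mem_univ v) with hv | hv
    · exact h.chromaticNumber_induce_compl_singleton_lt hA.1 hB.1.chromaticNumber_ne_top
        ⟨v, hv⟩
    · exact h.symm.chromaticNumber_induce_compl_singleton_lt hB.1 hA.1.chromaticNumber_ne_top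
        ⟨v, hv⟩
  · rcases h.union_eq_univ.ge (Set.mem_univ x) with hx | hx
    · exact h.chromaticNumber_induce_compl_pair_add_two_le hA hB.1 hx hxy
    · exact h.symm.chromaticNumber_induce_compl_pair_add_two_le hB hA.1 hx hxy

end SimpleGraph.IsJoin

theorem stmt12_general {V : Type} (G : SimpleGraph V) (s : Set V)
    (hjoin : ∀ u ∈ s, ∀ v ∈ sᶜ, G.Adj u v) :
    DoubleCritical G ↔ DoubleCritical (G.induce s) ∧ DoubleCritical (G.induce sᶜ) := by
  have h : G.IsJoin s sᶜ := ⟨Set.union_compl_self s, hjoin⟩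
  exact ⟨fun hG => ⟨h.doubleCritical_induce_left hG, h.symm.doubleCritical_induce_left hG⟩,
    fun hs => h.doubleCritical hs.1 hs.2⟩

/-- Let `G` be decomposable into the non-empty induced subgraphs `G₁ = G[s]` and
`G₂ = G[sᶜ]`, i.e. every vertex of `s` is adjacent in `G` to every vertex of `sᶜ`.
Then `G` is double-critical if and only if both `G₁` and `G₂` are double-critical. -/
theorem stmt12 {V : Type} [Fintype V] (G : SimpleGraph V) (s : Set V)
    (hs : s.Nonempty) (hsc : sᶜ.Nonempty)
    (hjoin : ∀ u ∈ s, ∀ v ∈ sᶜ, G.Adj u v) :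
    DoubleCritical G ↔ DoubleCritical (G.induce s) ∧ DoubleCritical (G.induce sᶜ) :=
  stmt12_general G s hjoin
end

section
/- No non-complete 4-critical graph contains two non-incident double-critical edges; that is, if G is a vertex-critical graph with χ(G) = 4 that is not a complete graph, and xy and vw are edges of G with {x,y} ∩ {v,w} = ∅, then χ(G − x − y) = 2 and χ(G − v − w) = 2 cannot both hold. -/
open SimpleGraph

/-!
Suppose `G - x - y` and `G - v - w` are bipartite, with colourings `f` and `g`. If, say, `x` and
`v` were not adjacent, then `G` would be 3-colourable: the `g`-class of `{v, w}ᶜ` containing `y`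
is independent, and the rest of `G` is 2-coloured by `f` after recolouring `x` like `v`, because
the only possible neighbour of `x` there is `w`. So in a 4-chromatic `G` the four vertices
`x, y, v, w` span a `K₄`, and in a 4-critical graph no vertex can lie outside a `K₄`, so `G` is
complete.
-/

namespace SimpleGraph

variable {V : Type*} {G : SimpleGraph V}

theorem induce_colorable_iff {s : Set V} {n : ℕ} [NeZero n] :
    (G.induce s).Colorable n ↔
      ∃ c : V → Fin n, ∀ a ∈ s, ∀ b ∈ s, G.Adj a b → c a ≠ c b := by
  classical
  constructor
  · rintro ⟨C⟩
    refine ⟨fun u ↦ if h : u ∈ s then C ⟨u, h⟩ else 0, fun a ha b hb hab ↦ ?_⟩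
    simpa [ha, hb] using C.valid (show (G.induce s).Adj ⟨a, ha⟩ ⟨b, hb⟩ from hab)
  · rintro ⟨c, hc⟩
    exact ⟨Coloring.mk (fun u ↦ c u) fun {a b} hab ↦ hc a a.2 b b.2 hab⟩

theorem colorable_succ_of_isIndepSet {s : Set V} {n : ℕ} (hs : G.IsIndepSet s)
    (h : (G.induce sᶜ).Colorable n) : G.Colorable (n + 1) := by
  classical
  obtain ⟨C⟩ := h
  refine ⟨Coloring.mk (fun u ↦ if h : u ∈ s then Fin.last n else (C ⟨u, h⟩).castSucc)
    fun {a b} hab ↦ ?_⟩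
  by_cases ha : a ∈ s <;> by_cases hb : b ∈ s
  · exact absurd hab (hs ha hb (G.ne_of_adj hab))
  · simpa [ha, hb] using (Fin.castSucc_lt_last _).ne'
  · simp [ha, hb]
  · simpa [ha, hb] using C.valid (show (G.induce sᶜ).Adj ⟨a, ha⟩ ⟨b, hb⟩ from hab)

theorem colorable_three_of_colorable_two_off_edges {x y v w : V}
    (hxy : G.Adj x y) (hvw : G.Adj v w)
    (hxv : x ≠ v) (hxw : x ≠ w) (hyv : y ≠ v) (hyw : y ≠ w) (hnadj : ¬ G.Adj x v)
    (h₁ : (G.induce ({x, y}ᶜ : Set V)).Colorable 2)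
    (h₂ : (G.induce ({v, w}ᶜ : Set V)).Colorable 2) : G.Colorable 3 := by
  classical
  obtain ⟨f, hf⟩ := induce_colorable_iff.mp h₁
  obtain ⟨g, hg⟩ := induce_colorable_iff.mp h₂
  have hf' : ∀ a b, a ≠ x → a ≠ y → b ≠ x → b ≠ y → G.Adj a b → f a ≠ f b :=
    fun a b ha ha' hb hb' ↦ hf a (by simp [ha, ha']) b (by simp [hb, hb'])
  have hg' : ∀ a b, a ≠ v → a ≠ w → b ≠ v → b ≠ w → G.Adj a b → g a ≠ g b :=
    fun a b ha ha' hb hb' ↦ hg a (by simp [ha, ha']) b (by simp [hb, hb'])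
  set I : Set V := {u | u ≠ v ∧ u ≠ w ∧ g u ≠ g x}
  have hI : G.IsIndepSet I := by
    rintro a ⟨hav, haw, ha⟩ b ⟨hbv, hbw, hb⟩ - hab
    exact hg' a b hav haw hbv hbw hab (by omega)
  have hyI : y ∈ I := ⟨hyv, hyw, (hg' x y hxv hxw hyv hyw hxy).symm⟩
  have hx_nbr : ∀ b ∉ I, G.Adj x b → b = w := by
    intro b hb hxb
    by_contra hbw
    have hbv : b ≠ v := by rintro rfl; exact hnadj hxb
    exact hb ⟨hbv, hbw, (hg' x b hxv hxw hbv hbw hxb).symm⟩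
  have hfvw : f v ≠ f w := hf' v w hxv.symm hyv.symm hxw.symm hyw.symm hvw
  have hne_y : ∀ a ∉ I, a ≠ y := by rintro a ha rfl; exact ha hyI
  refine colorable_succ_of_isIndepSet hI (induce_colorable_iff.mpr
    ⟨fun u ↦ if u = x then f v else f u, fun a ha b hb hab ↦ ?_⟩)
  by_cases hax : a = x <;> by_cases hbx : b = x
  · exact absurd (hax.trans hbx.symm) (G.ne_of_adj hab)
  · obtain rfl := hx_nbr b hb (hax ▸ hab)
    simpa [hax, hxw.symm] using hfvw
  · obtain rfl := hx_nbr a ha (hbx ▸ hab.symm)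
    simpa [hbx, hxw.symm] using hfvw.symm
  · simpa [hax, hbx] using hf' a b hax (hne_y a ha) hbx (hne_y b hb) hab

theorem pairwise_adj_of_not_colorable_three {x y v w : V}
    (hxy : G.Adj x y) (hvw : G.Adj v w)
    (hxv : x ≠ v) (hxw : x ≠ w) (hyv : y ≠ v) (hyw : y ≠ w)
    (h₁ : (G.induce ({x, y}ᶜ : Set V)).Colorable 2)
    (h₂ : (G.induce ({v, w}ᶜ : Set V)).Colorable 2) (h₃ : ¬ G.Colorable 3) :
    Pairwise fun i j ↦ G.Adj (![x, y, v, w] i) (![x, y, v, w] j) := by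
  have h₁' : (G.induce ({y, x}ᶜ : Set V)).Colorable 2 := by rwa [Set.pair_comm]
  have h₂' : (G.induce ({w, v}ᶜ : Set V)).Colorable 2 := by rwa [Set.pair_comm]
  have hxv' : G.Adj x v := not_not.mp fun h ↦ h₃ <|
    colorable_three_of_colorable_two_off_edges hxy hvw hxv hxw hyv hyw h h₁ h₂
  have hxw' : G.Adj x w := not_not.mp fun h ↦ h₃ <|
    colorable_three_of_colorable_two_off_edges hxy hvw.symm hxw hxv hyw hyv h h₁ h₂'
  have hyv' : G.Adj y v := not_not.mp fun h ↦ h₃ <|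
    colorable_three_of_colorable_two_off_edges hxy.symm hvw hyv hyw hxv hxw h h₁' h₂
  have hyw' : G.Adj y w := not_not.mp fun h ↦ h₃ <|
    colorable_three_of_colorable_two_off_edges hxy.symm hvw.symm hyw hyv hxw hxv h h₁' h₂'
  intro i j hij
  fin_cases i <;> fin_cases j <;> simp_all [G.adj_comm]

end SimpleGraph

theorem VertexCritical.eq_top_of_pairwise_adj {V : Type} {ι : Type*} {G : SimpleGraph V}
    (hcrit : VertexCritical G) (f : ι → V) (hf : Pairwise fun i j ↦ G.Adj (f i) (f j))
    (hχ : G.chromaticNumber ≤ Nat.card ι) : G = ⊤ := by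
  have hmem : ∀ u, u ∈ Set.range f := by
    intro u
    by_contra hu
    have hK : (Nat.card ι : ℕ∞) ≤ (G.induce ({u}ᶜ : Set V)).chromaticNumber :=
      le_chromaticNumber_of_pairwise_adj le_rfl (fun i ↦ ⟨f i, fun h ↦ hu ⟨i, h⟩⟩) hf
    exact (hK.trans_lt (hcrit u)).not_ge hχ
  rw [← isClique_univ]
  rintro a - b - hab
  obtain ⟨i, rfl⟩ := hmem a
  obtain ⟨j, rfl⟩ := hmem b
  exact hf (ne_of_apply_ne f hab)

theorem stmt13_general {V : Type} (G : SimpleGraph V)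
    (hcrit : VertexCritical G) (hchrom : G.chromaticNumber = 4) (hnc : G ≠ ⊤)
    (x y v w : V) (hxy : G.Adj x y) (hvw : G.Adj v w)
    (hxv : x ≠ v) (hxw : x ≠ w) (hyv : y ≠ v) (hyw : y ≠ w) :
    ¬ ((G.induce ({x, y}ᶜ : Set V)).chromaticNumber = 2 ∧
       (G.induce ({v, w}ᶜ : Set V)).chromaticNumber = 2) := by
  rintro ⟨h₁, h₂⟩
  have h₃ : ¬ G.Colorable 3 := fun h ↦ by
    have := h.chromaticNumber_le
    rw [hchrom] at this
    exact absurd this (by decide)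
  have hK₄ := pairwise_adj_of_not_colorable_three hxy hvw hxv hxw hyv hyw
    (chromaticNumber_le_iff_colorable.mp h₁.le) (chromaticNumber_le_iff_colorable.mp h₂.le) h₃
  exact hnc (hcrit.eq_top_of_pairwise_adj _ hK₄ (by simp [hchrom]))

/-- No non-complete `4`-critical graph contains two non-incident double-critical edges:
if `xy` and `vw` are edges sharing no endpoint, then `χ(G - x - y) = 2` and
`χ(G - v - w) = 2` cannot both hold. -/
theorem stmt13 {V : Type} [Fintype V] (G : SimpleGraph V)
    (hcrit : VertexCritical G) (hchrom : G.chromaticNumber = 4) (hnc : G ≠ ⊤)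
    (x y v w : V) (hxy : G.Adj x y) (hvw : G.Adj v w)
    (hxv : x ≠ v) (hxw : x ≠ w) (hyv : y ≠ v) (hyw : y ≠ w) :
    ¬ ((G.induce ({x, y}ᶜ : Set V)).chromaticNumber = 2 ∧
       (G.induce ({v, w}ᶜ : Set V)).chromaticNumber = 2) :=
  stmt13_general G hcrit hchrom hnc x y v w hxy hvw hxv hxw hyv hyw
end
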